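/- arXiv:2107.08651 — 7 statements merged into one kernel-verified Lean document; each statement's English description precedes it below -/
import Mathlib

section
/- For all continuous functions ψ : [0,L]×[0,D]→ℝ, z : [0,L]→ℝ, v : [0,L]→ℝ satisfying the compatibility condition z(0) = −c7·v(0), the backstepping transform β of (ψ,z,v) is a continuous function on [0,L]×[0,D]. -/
open Set MeasureTheory

noncomputable section

/-- Squared `L²`-norm of a function on `[0, L]`. -/
def nX (L : ℝ) (f : ℝ → ℝ) : ℝ := ∫ x in (0:ℝ)..L, f x ^ 2

/-- Squared `L²`-norm of a function on `[0, D]`. -/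
def nS (D : ℝ) (f : ℝ → ℝ) : ℝ := ∫ s in (0:ℝ)..D, f s ^ 2

/-- Squared `L²`-norm of a function on `[0, L] × [0, D]`. -/
def n2 (L D : ℝ) (f : ℝ → ℝ → ℝ) : ℝ := ∫ x in (0:ℝ)..L, ∫ s in (0:ℝ)..D, f x s ^ 2

/-- The fixed constants of the problem. -/
structure Params where
  L : ℝ
  D : ℝ
  c1 : ℝ
  c2 : ℝ
  c3 : ℝ
  c4 : ℝ
  c5 : ℝ
  c6 : ℝ
  c7 : ℝ
  k : ℝ

namespace Params

/-- All constants are strictly positive and `(c1 + c4) * D < L`. -/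
def Pos (P : Params) : Prop :=
  0 < P.L ∧ 0 < P.D ∧ 0 < P.c1 ∧ 0 < P.c2 ∧ 0 < P.c3 ∧ 0 < P.c4 ∧ 0 < P.c5 ∧
    0 < P.c6 ∧ 0 < P.c7 ∧ 0 < P.k ∧ (P.c1 + P.c4) * P.D < P.L

/-- The kernel `g(x,y,τ)`. -/
def gk (P : Params) (x y τ : ℝ) : ℝ :=
  P.k * P.c1 * P.c2 / (P.c1 + P.c4) *
    Real.exp (-(P.c1 * P.c2 / (P.c1 + P.c4)) * (x - y + P.c4 * τ))

/-- The kernel `𝔨(x,s,y)`. -/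
def kk (P : Params) (x s y : ℝ) : ℝ :=
  P.k * P.c5 / (P.c6 * (P.c1 + P.c4)) *
    Real.exp (-(P.c1 * P.c2 / (P.c1 + P.c4)) * x -
      P.c2 * P.c4 / (P.c1 + P.c4) * (y + P.c1 * s))

/-- The function `𝔠(x,τ)`. -/
def cc (P : Params) (x τ : ℝ) : ℝ :=
  (P.c1 + P.c4) / P.c4 * P.L - P.c1 / P.c4 * x - P.c1 * τ

def T1 (P : Params) (ψ : ℝ → ℝ → ℝ) (x s : ℝ) : ℝ :=
  ψ x s
    - (∫ τ in (0:ℝ)..(x / P.c1),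
        P.c1 * P.c2 * Real.exp (-(P.c1 * P.c2 * τ)) * ψ (x - P.c1 * τ) (s - τ))
    + (∫ τ in (x / P.c1)..s,
        P.c5 * P.c7 * Real.exp (-(P.c2 * x)) * ψ (P.c4 * (τ - x / P.c1)) (s - τ))
    + (∫ τ in (0:ℝ)..s, P.k * ψ (x + P.c4 * τ) (s - τ))
    - (∫ τ in (0:ℝ)..s,
        ∫ y in (max (x - P.c1 * τ) (P.c4 * (τ - x / P.c1)))..(x + P.c4 * τ),
          P.gk x y τ * ψ y (s - τ))

def T2 (P : Params) (ψ : ℝ → ℝ → ℝ) (x s : ℝ) : ℝ :=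
  ψ x s
    - (∫ τ in (0:ℝ)..s,
        P.c1 * P.c2 * Real.exp (-(P.c1 * P.c2 * τ)) * ψ (x - P.c1 * τ) (s - τ))
    + (∫ τ in (0:ℝ)..s, P.k * ψ (x + P.c4 * τ) (s - τ))
    - (∫ τ in (0:ℝ)..s,
        ∫ y in (x - P.c1 * τ)..(x + P.c4 * τ), P.gk x y τ * ψ y (s - τ))

def T3 (P : Params) (ψ : ℝ → ℝ → ℝ) (x s : ℝ) : ℝ :=
  ψ x s
    - (∫ τ in (0:ℝ)..s,
        P.c1 * P.c2 * Real.exp (-(P.c1 * P.c2 * τ)) * ψ (x - P.c1 * τ) (s - τ))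
    + (∫ τ in (0:ℝ)..((P.L - x) / P.c4), P.k * ψ (x + P.c4 * τ) (s - τ))
    + (∫ τ in ((P.L - x) / P.c4)..s, P.k * ψ P.L (s - τ))
    - (∫ τ in (0:ℝ)..s,
        ∫ y in (x - P.c1 * τ)..(min (x + P.c4 * τ) (P.cc x τ)),
          P.gk x y τ * ψ y (s - τ))
    - (∫ τ in ((P.L - x) / P.c4)..s,
        ∫ y in (P.cc x τ)..P.L, P.k * P.c2 * Real.exp (-(P.c2 * P.L)) * ψ y (s - τ))

def Z1 (P : Params) (z : ℝ → ℝ) (x s : ℝ) : ℝ :=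
  (∫ y in (0:ℝ)..(P.c4 * (s - x / P.c1)),
      P.c5 * (P.k + P.c5 * P.c7) / (P.c6 * (P.c1 + P.c4)) *
        Real.exp (-(P.c2 * (x + y))) * z y)
    + (∫ y in (P.c4 * (s - x / P.c1))..(x + P.c4 * s), P.kk x s y * z y)

def Z2 (P : Params) (z : ℝ → ℝ) (x s : ℝ) : ℝ :=
  P.c5 / P.c6 * Real.exp (-(P.c2 * x)) * z (x - P.c1 * s)
    + (∫ y in (x - P.c1 * s)..(x + P.c4 * s), P.kk x s y * z y)

def Z3 (P : Params) (z : ℝ → ℝ) (x s : ℝ) : ℝ :=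
  P.c5 / P.c6 * Real.exp (-(P.c2 * x)) * z (x - P.c1 * s)
    + (∫ y in (P.cc x s)..P.L,
        P.k * P.c5 / (P.c1 * P.c6) * Real.exp (-(P.c2 * P.L)) * z y)
    + (∫ y in (x - P.c1 * s)..(P.cc x s), P.kk x s y * z y)

def Y1 (P : Params) (v : ℝ → ℝ) (x s : ℝ) : ℝ :=
  -(P.c5 * P.c7 / P.c6) * Real.exp (-(P.c2 * x)) * v (P.c4 * (s - x / P.c1))
    - P.k / P.c6 * v (x + P.c4 * s)
    - (∫ y in (0:ℝ)..(P.c4 * (s - x / P.c1)),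
        P.c1 * P.c5 * P.c7 * (P.k + P.c5 * P.c7) / (P.c4 * P.c6 * (P.c1 + P.c4)) *
          Real.exp (-(P.c2 * x)) * v y)

def Y2 (P : Params) (v : ℝ → ℝ) (x s : ℝ) : ℝ :=
  -(P.k / P.c6) * v (x + P.c4 * s)

/-- The backstepping transform of `(ψ, z, v)`. -/
def beta (P : Params) (ψ : ℝ → ℝ → ℝ) (z v : ℝ → ℝ) (x s : ℝ) : ℝ :=
  if x ≤ P.c1 * s then P.T1 ψ x s + P.Z1 z x s + P.Y1 v x s
  else if x ≤ P.L - P.c4 * s then P.T2 ψ x s + P.Z2 z x s + P.Y2 v x s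
  else P.T3 ψ x s + P.Z3 z x s - P.k / P.c6 * v P.L

/-- The kernel `𝔮(x,y,τ)` of the inverse transformation. -/
def qk (P : Params) (x y τ : ℝ) : ℝ :=
  P.k * P.c1 * P.c2 / (P.c1 + P.c4) *
    Real.exp (P.k * (x - y - P.c1 * τ) / (P.c1 + P.c4))

def Q1 (P : Params) (β : ℝ → ℝ → ℝ) (x s : ℝ) : ℝ :=
  β x s
    - (∫ τ in (x / P.c1)..s,
        ∫ y in (P.c4 * (τ - x / P.c1))..(x + P.c4 * τ), P.qk x y τ * β y (s - τ))
    - (∫ τ in (0:ℝ)..(x / P.c1),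
        ∫ y in (x - P.c1 * τ)..(x + P.c4 * τ), P.qk x y τ * β y (s - τ))
    - (∫ τ in (x / P.c1)..s,
        P.c2 * P.c4 * Real.exp (P.k * (x / P.c1 - τ)) *
          β (P.c4 * (τ - x / P.c1)) (s - τ))
    + (∫ τ in (0:ℝ)..(x / P.c1), P.c1 * P.c2 * β (x - P.c1 * τ) (s - τ))
    - (∫ τ in (0:ℝ)..s, P.k * Real.exp (-(P.k * τ)) * β (x + P.c4 * τ) (s - τ))

def Q2 (P : Params) (β : ℝ → ℝ → ℝ) (x s : ℝ) : ℝ :=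
  β x s
    - (∫ τ in (0:ℝ)..s,
        ∫ y in (x - P.c1 * τ)..(x + P.c4 * τ), P.qk x y τ * β y (s - τ))
    + (∫ τ in (0:ℝ)..s, P.c1 * P.c2 * β (x - P.c1 * τ) (s - τ))
    - (∫ τ in (0:ℝ)..s, P.k * Real.exp (-(P.k * τ)) * β (x + P.c4 * τ) (s - τ))

def Q3 (P : Params) (β : ℝ → ℝ → ℝ) (x s : ℝ) : ℝ :=
  β x s
    - (∫ τ in (0:ℝ)..s,
        ∫ y in (x - P.c1 * τ)..(min P.L (x + P.c4 * τ)), P.qk x y τ * β y (s - τ))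
    + (∫ τ in (0:ℝ)..s, P.c1 * P.c2 * β (x - P.c1 * τ) (s - τ))
    - (∫ τ in ((P.L - x) / P.c4)..s,
        (P.c1 * P.c2 * Real.exp (P.k * (x - P.L - P.c1 * τ) / (P.c1 + P.c4))
            - P.c1 * P.c2 * Real.exp (-(P.k * τ)) + P.k * Real.exp (-(P.k * τ))) *
          β P.L (s - τ))
    - (∫ τ in (0:ℝ)..((P.L - x) / P.c4),
        P.k * Real.exp (-(P.k * τ)) * β (x + P.c4 * τ) (s - τ))

def R1 (P : Params) (v : ℝ → ℝ) (x s : ℝ) : ℝ :=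
  P.c2 * P.c4 / P.c6 * Real.exp (P.k * (x / P.c1 - s)) * v (P.c4 * (s - x / P.c1))
    + P.k / P.c6 * Real.exp (-(P.k * s)) * v (x + P.c4 * s)
    + (∫ y in (P.c4 * (s - x / P.c1))..(x + P.c4 * s),
        P.k * P.c1 * P.c2 / (P.c6 * (P.c1 + P.c4)) *
          Real.exp (P.k * (x - y - P.c1 * s) / (P.c1 + P.c4)) * v y)

def R2 (P : Params) (v : ℝ → ℝ) (x s : ℝ) : ℝ :=
  P.k / P.c6 * Real.exp (-(P.k * s)) * v (x + P.c4 * s)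
    + (∫ y in (x - P.c1 * s)..(x + P.c4 * s),
        P.k * P.c1 * P.c2 / (P.c6 * (P.c1 + P.c4)) *
          Real.exp (P.k * (x - y - P.c1 * s) / (P.c1 + P.c4)) * v y)

def R3 (P : Params) (v : ℝ → ℝ) (x s : ℝ) : ℝ :=
  (∫ y in (x - P.c1 * s)..P.L,
      P.k * P.c1 * P.c2 / (P.c6 * (P.c1 + P.c4)) *
        Real.exp (P.k * (x - y - P.c1 * s) / (P.c1 + P.c4)) * v y)
    + (P.c1 * P.c2 / P.c6 *
          (Real.exp (P.k * (x - P.L - P.c1 * s) / (P.c1 + P.c4)) -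
            Real.exp (-(P.k * s)))
        + P.k / P.c6 * Real.exp (-(P.k * s))) * v P.L

def Binv (P : Params) (z : ℝ → ℝ) (x s : ℝ) : ℝ :=
  -(P.c5 / P.c6) * Real.exp (P.c2 * (P.c1 * s - x)) * z (x - P.c1 * s)

/-- The inverse backstepping transform of `(β, z, v)`. -/
def psiInv (P : Params) (β : ℝ → ℝ → ℝ) (z v : ℝ → ℝ) (x s : ℝ) : ℝ :=
  if x < P.c1 * s then P.Q1 β x s + P.R1 v x s
  else if x ≤ P.L - P.c4 * s then P.Q2 β x s + P.R2 v x s + P.Binv z x s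
  else P.Q3 β x s + P.R3 v x s + P.Binv z x s

end Params

section BSAux

variable {X : Type*} [TopologicalSpace X]

lemma bs_paste {β : Type*} [TopologicalSpace β] {f : X → β} {s t : Set X}
    (hs : IsClosed s) (ht : IsClosed t) (hfs : ContinuousOn f s) (hft : ContinuousOn f t) :
    ContinuousOn f (s ∪ t) := by
  intro x hx
  have hcs : ContinuousWithinAt f s x := by
    by_cases h : x ∈ s
    · exact hfs x h
    · exact continuousWithinAt_of_notMem_closure (by rwa [hs.closure_eq])
  have hct : ContinuousWithinAt f t x := by
    by_cases h : x ∈ t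
    · exact hft x h
    · exact continuousWithinAt_of_notMem_closure (by rwa [ht.closure_eq])
  exact hcs.union hct

lemma bs_capp {Ψ : ℝ → ℝ → ℝ} (hΨ : Continuous fun p : ℝ × ℝ => Ψ p.1 p.2)
    {f g : X → ℝ} (hf : Continuous f) (hg : Continuous g) :
    Continuous fun x => Ψ (f x) (g x) := hΨ.comp (hf.prodMk hg)

lemma bs_param {G : X → ℝ → ℝ} (hG : Continuous fun q : X × ℝ => G q.1 q.2)
    {a b : X → ℝ} (ha : Continuous a) (hb : Continuous b) :
    Continuous fun x => ∫ τ in a x..b x, G x τ := by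
  have h1 : Continuous fun x => ∫ τ in (0:ℝ)..b x, G x τ :=
    intervalIntegral.continuous_parametric_intervalIntegral_of_continuous hG hb
  have h2 : Continuous fun x => ∫ τ in (0:ℝ)..a x, G x τ :=
    intervalIntegral.continuous_parametric_intervalIntegral_of_continuous hG ha
  have key : (fun x => ∫ τ in a x..b x, G x τ)
      = fun x => (∫ τ in (0:ℝ)..b x, G x τ) - ∫ τ in (0:ℝ)..a x, G x τ := by
    funext x
    have hc : Continuous fun τ => G x τ := hG.comp (continuous_const.prodMk continuous_id)
    rw [intervalIntegral.integral_interval_sub_left (hc.intervalIntegrable _ _)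
      (hc.intervalIntegrable _ _)]
  rw [key]; exact h1.sub h2

end BSAux

section BSCont

variable (P : Params) {Ψ : ℝ → ℝ → ℝ} {Z V : ℝ → ℝ}

lemma bs_contT1 (hΨ : Continuous fun p : ℝ × ℝ => Ψ p.1 p.2) :
    Continuous fun p : ℝ × ℝ => P.T1 Ψ p.1 p.2 := by
  unfold Params.T1 Params.gk
  refine ((((bs_capp hΨ continuous_fst continuous_snd).sub ?_).add ?_).add ?_).sub ?_
  · exact bs_param ((by fun_prop : Continuous fun q : (ℝ × ℝ) × ℝ =>
      P.c1 * P.c2 * Real.exp (-(P.c1 * P.c2 * q.2))).mul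
      (bs_capp hΨ (by fun_prop) (by fun_prop))) continuous_const (by fun_prop)
  · exact bs_param ((by fun_prop : Continuous fun q : (ℝ × ℝ) × ℝ =>
      P.c5 * P.c7 * Real.exp (-(P.c2 * q.1.1))).mul
      (bs_capp hΨ (by fun_prop) (by fun_prop))) (by fun_prop) continuous_snd
  · exact bs_param (continuous_const.mul
      (bs_capp hΨ (by fun_prop) (by fun_prop))) continuous_const continuous_snd
  · refine bs_param ?_ continuous_const continuous_snd
    refine bs_param ((by fun_prop : Continuous fun r : ((ℝ × ℝ) × ℝ) × ℝ =>
      P.k * P.c1 * P.c2 / (P.c1 + P.c4) *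
        Real.exp (-(P.c1 * P.c2 / (P.c1 + P.c4)) * (r.1.1.1 - r.2 + P.c4 * r.1.2))).mul
      (bs_capp hΨ (by fun_prop) (by fun_prop))) (by fun_prop) (by fun_prop)

lemma bs_contT2 (hΨ : Continuous fun p : ℝ × ℝ => Ψ p.1 p.2) :
    Continuous fun p : ℝ × ℝ => P.T2 Ψ p.1 p.2 := by
  unfold Params.T2 Params.gk
  refine (((bs_capp hΨ continuous_fst continuous_snd).sub ?_).add ?_).sub ?_
  · exact bs_param ((by fun_prop : Continuous fun q : (ℝ × ℝ) × ℝ =>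
      P.c1 * P.c2 * Real.exp (-(P.c1 * P.c2 * q.2))).mul
      (bs_capp hΨ (by fun_prop) (by fun_prop))) continuous_const continuous_snd
  · exact bs_param (continuous_const.mul
      (bs_capp hΨ (by fun_prop) (by fun_prop))) continuous_const continuous_snd
  · refine bs_param ?_ continuous_const continuous_snd
    refine bs_param ((by fun_prop : Continuous fun r : ((ℝ × ℝ) × ℝ) × ℝ =>
      P.k * P.c1 * P.c2 / (P.c1 + P.c4) *
        Real.exp (-(P.c1 * P.c2 / (P.c1 + P.c4)) * (r.1.1.1 - r.2 + P.c4 * r.1.2))).mul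
      (bs_capp hΨ (by fun_prop) (by fun_prop))) (by fun_prop) (by fun_prop)

lemma bs_contT3 (hΨ : Continuous fun p : ℝ × ℝ => Ψ p.1 p.2) :
    Continuous fun p : ℝ × ℝ => P.T3 Ψ p.1 p.2 := by
  unfold Params.T3 Params.gk Params.cc
  refine (((((bs_capp hΨ continuous_fst continuous_snd).sub ?_).add ?_).add ?_).sub ?_).sub ?_
  · exact bs_param ((by fun_prop : Continuous fun q : (ℝ × ℝ) × ℝ =>
      P.c1 * P.c2 * Real.exp (-(P.c1 * P.c2 * q.2))).mul
      (bs_capp hΨ (by fun_prop) (by fun_prop))) continuous_const continuous_snd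
  · exact bs_param (continuous_const.mul
      (bs_capp hΨ (by fun_prop) (by fun_prop))) continuous_const (by fun_prop)
  · exact bs_param (continuous_const.mul
      (bs_capp hΨ continuous_const (by fun_prop))) (by fun_prop) continuous_snd
  · refine bs_param ?_ continuous_const continuous_snd
    refine bs_param ((by fun_prop : Continuous fun r : ((ℝ × ℝ) × ℝ) × ℝ =>
      P.k * P.c1 * P.c2 / (P.c1 + P.c4) *
        Real.exp (-(P.c1 * P.c2 / (P.c1 + P.c4)) * (r.1.1.1 - r.2 + P.c4 * r.1.2))).mul
      (bs_capp hΨ (by fun_prop) (by fun_prop))) (by fun_prop) ?_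
    · exact (by fun_prop : Continuous fun q : (ℝ × ℝ) × ℝ => q.1.1 + P.c4 * q.2).min (by fun_prop)
  · refine bs_param ?_ (by fun_prop) continuous_snd
    refine bs_param ((by fun_prop : Continuous fun r : ((ℝ × ℝ) × ℝ) × ℝ =>
      P.k * P.c2 * Real.exp (-(P.c2 * P.L))).mul
      (bs_capp hΨ (by fun_prop) (by fun_prop))) (by fun_prop) continuous_const

lemma bs_contZ1 (hZ : Continuous Z) :
    Continuous fun p : ℝ × ℝ => P.Z1 Z p.1 p.2 := by
  unfold Params.Z1 Params.kk
  refine Continuous.add ?_ ?_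
  · exact bs_param ((by fun_prop : Continuous fun q : (ℝ × ℝ) × ℝ =>
      P.c5 * (P.k + P.c5 * P.c7) / (P.c6 * (P.c1 + P.c4)) *
        Real.exp (-(P.c2 * (q.1.1 + q.2)))).mul
      (hZ.comp continuous_snd)) continuous_const (by fun_prop)
  · exact bs_param ((by fun_prop : Continuous fun q : (ℝ × ℝ) × ℝ =>
      P.k * P.c5 / (P.c6 * (P.c1 + P.c4)) *
        Real.exp (-(P.c1 * P.c2 / (P.c1 + P.c4)) * q.1.1 -
          P.c2 * P.c4 / (P.c1 + P.c4) * (q.2 + P.c1 * q.1.2))).mul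
      (hZ.comp continuous_snd)) (by fun_prop) (by fun_prop)

lemma bs_contZ2 (hZ : Continuous Z) :
    Continuous fun p : ℝ × ℝ => P.Z2 Z p.1 p.2 := by
  unfold Params.Z2 Params.kk
  refine Continuous.add ?_ ?_
  · exact ((by fun_prop : Continuous fun p : ℝ × ℝ =>
      P.c5 / P.c6 * Real.exp (-(P.c2 * p.1))).mul (hZ.comp (by fun_prop)))
  · exact bs_param ((by fun_prop : Continuous fun q : (ℝ × ℝ) × ℝ =>
      P.k * P.c5 / (P.c6 * (P.c1 + P.c4)) *
        Real.exp (-(P.c1 * P.c2 / (P.c1 + P.c4)) * q.1.1 -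
          P.c2 * P.c4 / (P.c1 + P.c4) * (q.2 + P.c1 * q.1.2))).mul
      (hZ.comp continuous_snd)) (by fun_prop) (by fun_prop)

lemma bs_contZ3 (hZ : Continuous Z) :
    Continuous fun p : ℝ × ℝ => P.Z3 Z p.1 p.2 := by
  unfold Params.Z3 Params.kk Params.cc
  refine Continuous.add (Continuous.add ?_ ?_) ?_
  · exact ((by fun_prop : Continuous fun p : ℝ × ℝ =>
      P.c5 / P.c6 * Real.exp (-(P.c2 * p.1))).mul (hZ.comp (by fun_prop)))
  · exact bs_param (continuous_const.mul (hZ.comp continuous_snd)) (by fun_prop) continuous_const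
  · exact bs_param ((by fun_prop : Continuous fun q : (ℝ × ℝ) × ℝ =>
      P.k * P.c5 / (P.c6 * (P.c1 + P.c4)) *
        Real.exp (-(P.c1 * P.c2 / (P.c1 + P.c4)) * q.1.1 -
          P.c2 * P.c4 / (P.c1 + P.c4) * (q.2 + P.c1 * q.1.2))).mul
      (hZ.comp continuous_snd)) (by fun_prop) (by fun_prop)

lemma bs_contY1 (hV : Continuous V) :
    Continuous fun p : ℝ × ℝ => P.Y1 V p.1 p.2 := by
  unfold Params.Y1
  refine Continuous.sub (Continuous.sub ?_ ?_) ?_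
  · exact ((by fun_prop : Continuous fun p : ℝ × ℝ =>
      -(P.c5 * P.c7 / P.c6) * Real.exp (-(P.c2 * p.1))).mul (hV.comp (by fun_prop)))
  · exact continuous_const.mul (hV.comp (by fun_prop))
  · exact bs_param ((by fun_prop : Continuous fun q : (ℝ × ℝ) × ℝ =>
      P.c1 * P.c5 * P.c7 * (P.k + P.c5 * P.c7) / (P.c4 * P.c6 * (P.c1 + P.c4)) *
        Real.exp (-(P.c2 * q.1.1))).mul
      (hV.comp continuous_snd)) continuous_const (by fun_prop)

lemma bs_contY2 (hV : Continuous V) :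
    Continuous fun p : ℝ × ℝ => P.Y2 V p.1 p.2 := by
  unfold Params.Y2
  exact continuous_const.mul (hV.comp (by fun_prop))

end BSCont

section BSCongr

variable (P : Params) {ψ Ψ : ℝ → ℝ → ℝ} {z Z v V : ℝ → ℝ}

set_option maxHeartbeats 1000000 in
lemma bs_congrR2 (hP : P.Pos)
    (hψe : ∀ a b, 0 ≤ a → a ≤ P.L → 0 ≤ b → b ≤ P.D → Ψ a b = ψ a b)
    (hze : ∀ a, 0 ≤ a → a ≤ P.L → Z a = z a)
    (hve : ∀ a, 0 ≤ a → a ≤ P.L → V a = v a)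
    {x s : ℝ} (h0s : 0 ≤ s) (hsD : s ≤ P.D) (hr1 : P.c1 * s ≤ x) (hr2 : x ≤ P.L - P.c4 * s) :
    P.T2 Ψ x s + P.Z2 Z x s + P.Y2 V x s = P.T2 ψ x s + P.Z2 z x s + P.Y2 v x s := by
  obtain ⟨hL, hD, hc1, hc2, hc3, hc4, hc5, hc6, hc7, hk, hLD⟩ := hP
  have h0x : 0 ≤ x := le_trans (by positivity) hr1
  have hxL : x ≤ P.L := by nlinarith [mul_nonneg hc4.le h0s]
  have hT : P.T2 Ψ x s = P.T2 ψ x s := by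
    unfold Params.T2
    congr 1
    · congr 1
      · congr 1
        · exact hψe x s h0x hxL h0s hsD
        · refine intervalIntegral.integral_congr fun τ hτ => ?_
          rw [uIcc_of_le h0s] at hτ
          obtain ⟨hτ1, hτ2⟩ := hτ
          have k1 : P.c1 * τ ≤ P.c1 * s := mul_le_mul_of_nonneg_left hτ2 hc1.le
          have k2 : 0 ≤ P.c1 * τ := mul_nonneg hc1.le hτ1
          rw [hψe (x - P.c1 * τ) (s - τ) (by linarith) (by linarith) (by linarith) (by linarith)]
      · refine intervalIntegral.integral_congr fun τ hτ => ?_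
        rw [uIcc_of_le h0s] at hτ
        obtain ⟨hτ1, hτ2⟩ := hτ
        have k1 : P.c4 * τ ≤ P.c4 * s := mul_le_mul_of_nonneg_left hτ2 hc4.le
        have k2 : 0 ≤ P.c4 * τ := mul_nonneg hc4.le hτ1
        rw [hψe (x + P.c4 * τ) (s - τ) (by linarith) (by linarith) (by linarith) (by linarith)]
    · refine intervalIntegral.integral_congr fun τ hτ => ?_
      rw [uIcc_of_le h0s] at hτ
      obtain ⟨hτ1, hτ2⟩ := hτ
      refine intervalIntegral.integral_congr fun y hy => ?_
      have k1 : P.c1 * τ ≤ P.c1 * s := mul_le_mul_of_nonneg_left hτ2 hc1.le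
      have k2 : 0 ≤ P.c1 * τ := mul_nonneg hc1.le hτ1
      have k3 : P.c4 * τ ≤ P.c4 * s := mul_le_mul_of_nonneg_left hτ2 hc4.le
      have k4 : 0 ≤ P.c4 * τ := mul_nonneg hc4.le hτ1
      rw [uIcc_of_le (by linarith)] at hy
      obtain ⟨hy1, hy2⟩ := hy
      rw [hψe y (s - τ) (by linarith [hy1]) (by linarith [hy2]) (by linarith) (by linarith)]
  have hZ : P.Z2 Z x s = P.Z2 z x s := by
    unfold Params.Z2
    have k1 : 0 ≤ P.c1 * s := mul_nonneg hc1.le h0s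
    have k2 : 0 ≤ P.c4 * s := mul_nonneg hc4.le h0s
    congr 1
    · rw [hze (x - P.c1 * s) (by linarith) (by linarith)]
    · refine intervalIntegral.integral_congr fun y hy => ?_
      rw [uIcc_of_le (by linarith)] at hy
      obtain ⟨hy1, hy2⟩ := hy
      rw [hze y (by linarith [hy1]) (by linarith [hy2])]
  have hY : P.Y2 V x s = P.Y2 v x s := by
    unfold Params.Y2
    have k2 : 0 ≤ P.c4 * s := mul_nonneg hc4.le h0s
    rw [hve (x + P.c4 * s) (by linarith) (by linarith)]
  rw [hT, hZ, hY]

set_option maxHeartbeats 1000000 in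
lemma bs_match12 (hP : P.Pos) (Ψ : ℝ → ℝ → ℝ) (Z V : ℝ → ℝ)
    (hZV : Z 0 = -P.c7 * V 0) {s : ℝ} (h0s : 0 ≤ s) :
    P.T1 Ψ (P.c1 * s) s + P.Z1 Z (P.c1 * s) s + P.Y1 V (P.c1 * s) s
      = P.T2 Ψ (P.c1 * s) s + P.Z2 Z (P.c1 * s) s + P.Y2 V (P.c1 * s) s := by
  obtain ⟨hL, hD, hc1, hc2, hc3, hc4, hc5, hc6, hc7, hk, hLD⟩ := hP
  have hdiv : P.c1 * s / P.c1 = s := mul_div_cancel_left₀ s hc1.ne'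
  have emax : (∫ τ in (0:ℝ)..s,
      ∫ y in (max (P.c1 * s - P.c1 * τ) (P.c4 * (τ - s)))..(P.c1 * s + P.c4 * τ),
        P.gk (P.c1 * s) y τ * Ψ y (s - τ))
      = ∫ τ in (0:ℝ)..s,
      ∫ y in (P.c1 * s - P.c1 * τ)..(P.c1 * s + P.c4 * τ),
        P.gk (P.c1 * s) y τ * Ψ y (s - τ) := by
    refine intervalIntegral.integral_congr fun τ hτ => ?_
    rw [uIcc_of_le h0s] at hτ
    obtain ⟨hτ1, hτ2⟩ := hτ
    have h1 : 0 ≤ P.c1 * (s - τ) := mul_nonneg hc1.le (sub_nonneg.2 hτ2)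
    have h2 : 0 ≤ P.c4 * (s - τ) := mul_nonneg hc4.le (sub_nonneg.2 hτ2)
    rw [max_eq_left (by nlinarith)]
  unfold Params.T1 Params.T2 Params.Z1 Params.Z2 Params.Y1 Params.Y2
  rw [hdiv, emax]
  simp only [sub_self, mul_zero, intervalIntegral.integral_same]
  rw [hZV]
  ring

set_option maxHeartbeats 1000000 in
lemma bs_match23 (hP : P.Pos) (Ψ : ℝ → ℝ → ℝ) (Z V : ℝ → ℝ) {s : ℝ} (h0s : 0 ≤ s) :
    P.T2 Ψ (P.L - P.c4 * s) s + P.Z2 Z (P.L - P.c4 * s) s + P.Y2 V (P.L - P.c4 * s) s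
      = P.T3 Ψ (P.L - P.c4 * s) s + P.Z3 Z (P.L - P.c4 * s) s - P.k / P.c6 * V P.L := by
  obtain ⟨hL, hD, hc1, hc2, hc3, hc4, hc5, hc6, hc7, hk, hLD⟩ := hP
  have h4 : P.c4 ≠ 0 := hc4.ne'
  have hdiv : (P.L - (P.L - P.c4 * s)) / P.c4 = s := by field_simp; ring
  have hcc : P.cc (P.L - P.c4 * s) s = P.L := by unfold Params.cc; field_simp; ring
  have hupp : P.L - P.c4 * s + P.c4 * s = P.L := by ring
  have emin : (∫ τ in (0:ℝ)..s,
      ∫ y in (P.L - P.c4 * s - P.c1 * τ)..(min (P.L - P.c4 * s + P.c4 * τ)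
          (P.cc (P.L - P.c4 * s) τ)),
        P.gk (P.L - P.c4 * s) y τ * Ψ y (s - τ))
      = ∫ τ in (0:ℝ)..s,
      ∫ y in (P.L - P.c4 * s - P.c1 * τ)..(P.L - P.c4 * s + P.c4 * τ),
        P.gk (P.L - P.c4 * s) y τ * Ψ y (s - τ) := by
    refine intervalIntegral.integral_congr fun τ hτ => ?_
    rw [uIcc_of_le h0s] at hτ
    obtain ⟨hτ1, hτ2⟩ := hτ
    have hccτ : P.cc (P.L - P.c4 * s) τ = P.L + P.c1 * s - P.c1 * τ := by
      unfold Params.cc; field_simp; ring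
    have h1 : P.c1 * τ ≤ P.c1 * s := mul_le_mul_of_nonneg_left hτ2 hc1.le
    have h2 : P.c4 * τ ≤ P.c4 * s := mul_le_mul_of_nonneg_left hτ2 hc4.le
    rw [min_eq_left (by rw [hccτ]; linarith)]
  unfold Params.T2 Params.T3 Params.Z2 Params.Z3 Params.Y2
  rw [hdiv, emin, hcc, hupp]
  simp only [intervalIntegral.integral_same]
  ring

end BSCongr

section BSCongr2

variable (P : Params) {ψ Ψ : ℝ → ℝ → ℝ} {z Z v V : ℝ → ℝ}

set_option maxHeartbeats 1000000 in
lemma bs_congrR1 (hP : P.Pos)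
    (hψe : ∀ a b, 0 ≤ a → a ≤ P.L → 0 ≤ b → b ≤ P.D → Ψ a b = ψ a b)
    (hze : ∀ a, 0 ≤ a → a ≤ P.L → Z a = z a)
    (hve : ∀ a, 0 ≤ a → a ≤ P.L → V a = v a)
    {x s : ℝ} (h0x : 0 ≤ x) (hsD : s ≤ P.D) (hr : x ≤ P.c1 * s) :
    P.T1 Ψ x s + P.Z1 Z x s + P.Y1 V x s = P.T1 ψ x s + P.Z1 z x s + P.Y1 v x s := by
  obtain ⟨hL, hD, hc1, hc2, hc3, hc4, hc5, hc6, hc7, hk, hLD⟩ := hP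
  have h0s : 0 ≤ s := by
    by_contra hcon
    push_neg at hcon
    nlinarith [mul_neg_of_pos_of_neg hc1 hcon]
  have hxc : x / P.c1 ≤ s := by rw [div_le_iff₀ hc1]; linarith
  have h0xc : 0 ≤ x / P.c1 := div_nonneg h0x hc1.le
  have hxL : x ≤ P.L := by
    nlinarith [mul_le_mul_of_nonneg_left hsD hc1.le, mul_nonneg hc4.le hD.le]
  have hxc4 : 0 ≤ P.c4 * (x / P.c1) := mul_nonneg hc4.le h0xc
  have hc4s : P.c4 * s ≤ P.c4 * P.D := mul_le_mul_of_nonneg_left hsD hc4.le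
  have hc1s : P.c1 * s ≤ P.c1 * P.D := mul_le_mul_of_nonneg_left hsD hc1.le
  have hc1D : 0 ≤ P.c1 * P.D := mul_nonneg hc1.le hD.le
  have hc4D : 0 ≤ P.c4 * P.D := mul_nonneg hc4.le hD.le
  have hT : P.T1 Ψ x s = P.T1 ψ x s := by
    unfold Params.T1
    congr 1
    · congr 1
      · congr 1
        · congr 1
          · exact hψe x s h0x hxL h0s hsD
          · refine intervalIntegral.integral_congr fun τ hτ => ?_
            rw [uIcc_of_le h0xc] at hτ
            obtain ⟨hτ1, hτ2⟩ := hτ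
            have k1 : τ * P.c1 ≤ x := (le_div_iff₀ hc1).1 hτ2
            have k2 : 0 ≤ P.c1 * τ := mul_nonneg hc1.le hτ1
            rw [hψe (x - P.c1 * τ) (s - τ) (by linarith) (by linarith)
              (by linarith) (by linarith)]
        · refine intervalIntegral.integral_congr fun τ hτ => ?_
          rw [uIcc_of_le hxc] at hτ
          obtain ⟨hτ1, hτ2⟩ := hτ
          have k1 : 0 ≤ P.c4 * (τ - x / P.c1) := mul_nonneg hc4.le (by linarith)
          have k2 : P.c4 * (τ - x / P.c1) ≤ P.c4 * s :=
            mul_le_mul_of_nonneg_left (by linarith) hc4.le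
          rw [hψe (P.c4 * (τ - x / P.c1)) (s - τ) k1 (by linarith)
            (by linarith) (by linarith [h0xc])]
      · refine intervalIntegral.integral_congr fun τ hτ => ?_
        rw [uIcc_of_le h0s] at hτ
        obtain ⟨hτ1, hτ2⟩ := hτ
        have k1 : P.c4 * τ ≤ P.c4 * s := mul_le_mul_of_nonneg_left hτ2 hc4.le
        have k2 : 0 ≤ P.c4 * τ := mul_nonneg hc4.le hτ1
        rw [hψe (x + P.c4 * τ) (s - τ) (by linarith) (by linarith)
          (by linarith) (by linarith)]
    · refine intervalIntegral.integral_congr fun τ hτ => ?_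
      rw [uIcc_of_le h0s] at hτ
      obtain ⟨hτ1, hτ2⟩ := hτ
      have k1 : P.c1 * τ ≤ P.c1 * s := mul_le_mul_of_nonneg_left hτ2 hc1.le
      have k2 : 0 ≤ P.c1 * τ := mul_nonneg hc1.le hτ1
      have k3 : P.c4 * τ ≤ P.c4 * s := mul_le_mul_of_nonneg_left hτ2 hc4.le
      have k4 : 0 ≤ P.c4 * τ := mul_nonneg hc4.le hτ1
      refine intervalIntegral.integral_congr fun y hy => ?_
      have hml : max (x - P.c1 * τ) (P.c4 * (τ - x / P.c1)) ≤ x + P.c4 * τ := by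
        refine max_le (by linarith) ?_
        have : P.c4 * (τ - x / P.c1) = P.c4 * τ - P.c4 * (x / P.c1) := by ring
        linarith [hxc4]
      rw [uIcc_of_le hml] at hy
      obtain ⟨hy1, hy2⟩ := hy
      have hy0 : (0:ℝ) ≤ y := by
        rcases le_total τ (x / P.c1) with h | h
        · have k5 : τ * P.c1 ≤ x := (le_div_iff₀ hc1).1 h
          linarith [le_trans (le_max_left (x - P.c1 * τ) (P.c4 * (τ - x / P.c1))) hy1]
        · have k5 : 0 ≤ P.c4 * (τ - x / P.c1) := mul_nonneg hc4.le (by linarith)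
          linarith [le_trans (le_max_right (x - P.c1 * τ) (P.c4 * (τ - x / P.c1))) hy1]
      rw [hψe y (s - τ) hy0 (by linarith) (by linarith) (by linarith)]
  have hZ : P.Z1 Z x s = P.Z1 z x s := by
    unfold Params.Z1
    have hub : 0 ≤ P.c4 * (s - x / P.c1) := mul_nonneg hc4.le (by linarith)
    have hub2 : P.c4 * (s - x / P.c1) ≤ P.c4 * s := mul_le_mul_of_nonneg_left (by linarith) hc4.le
    have hlow : P.c4 * (s - x / P.c1) ≤ x + P.c4 * s := by
      have : P.c4 * (s - x / P.c1) = P.c4 * s - P.c4 * (x / P.c1) := by ring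
      linarith [hxc4]
    congr 1
    · refine intervalIntegral.integral_congr fun y hy => ?_
      rw [uIcc_of_le hub] at hy
      obtain ⟨hy1, hy2⟩ := hy
      rw [hze y (by linarith) (by linarith)]
    · refine intervalIntegral.integral_congr fun y hy => ?_
      rw [uIcc_of_le hlow] at hy
      obtain ⟨hy1, hy2⟩ := hy
      rw [hze y (by linarith) (by linarith)]
  have hY : P.Y1 V x s = P.Y1 v x s := by
    unfold Params.Y1
    have hub : 0 ≤ P.c4 * (s - x / P.c1) := mul_nonneg hc4.le (by linarith)
    have hub2 : P.c4 * (s - x / P.c1) ≤ P.c4 * s := mul_le_mul_of_nonneg_left (by linarith) hc4.le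
    congr 1
    · congr 1
      · rw [hve (P.c4 * (s - x / P.c1)) hub (by linarith)]
      · rw [hve (x + P.c4 * s) (by linarith [mul_nonneg hc4.le h0s]) (by linarith)]
    · refine intervalIntegral.integral_congr fun y hy => ?_
      rw [uIcc_of_le hub] at hy
      obtain ⟨hy1, hy2⟩ := hy
      rw [hve y (by linarith) (by linarith)]
  rw [hT, hZ, hY]

set_option maxHeartbeats 1000000 in
lemma bs_congrR3 (hP : P.Pos)
    (hψe : ∀ a b, 0 ≤ a → a ≤ P.L → 0 ≤ b → b ≤ P.D → Ψ a b = ψ a b)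
    (hze : ∀ a, 0 ≤ a → a ≤ P.L → Z a = z a)
    (hve : ∀ a, 0 ≤ a → a ≤ P.L → V a = v a)
    {x s : ℝ} (h0s : 0 ≤ s) (hsD : s ≤ P.D) (hr : P.L - P.c4 * s ≤ x) (hxL : x ≤ P.L) :
    P.T3 Ψ x s + P.Z3 Z x s - P.k / P.c6 * V P.L
      = P.T3 ψ x s + P.Z3 z x s - P.k / P.c6 * v P.L := by
  obtain ⟨hL, hD, hc1, hc2, hc3, hc4, hc5, hc6, hc7, hk, hLD⟩ := hP
  have hc4s : P.c4 * s ≤ P.c4 * P.D := mul_le_mul_of_nonneg_left hsD hc4.le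
  have hc1s : P.c1 * s ≤ P.c1 * P.D := mul_le_mul_of_nonneg_left hsD hc1.le
  have hc1D : 0 ≤ P.c1 * P.D := mul_nonneg hc1.le hD.le
  have hc4D : 0 ≤ P.c4 * P.D := mul_nonneg hc4.le hD.le
  have hc1s0 : 0 ≤ P.c1 * s := mul_nonneg hc1.le h0s
  have h0x : 0 ≤ x := by linarith
  have hLxs : (P.L - x) / P.c4 ≤ s := by rw [div_le_iff₀ hc4]; linarith
  have h0Lx : 0 ≤ (P.L - x) / P.c4 := div_nonneg (by linarith) hc4.le
  have hxs1 : 0 ≤ x - P.c1 * s := by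
    have k : (P.c1 + P.c4) * s ≤ (P.c1 + P.c4) * P.D :=
      mul_le_mul_of_nonneg_left hsD (by positivity)
    nlinarith
  have hcc4 : ∀ τ : ℝ, P.cc x τ * P.c4 = (P.c1 + P.c4) * P.L - P.c1 * x - P.c1 * (P.c4 * τ) := by
    intro τ
    unfold Params.cc
    field_simp
  have hccub : ∀ τ : ℝ, x - P.c1 * τ ≤ P.cc x τ := by
    intro τ
    nlinarith [hcc4 τ, hc4, mul_nonneg (add_pos hc1 hc4).le (sub_nonneg.2 hxL)]
  have hccL : ∀ τ : ℝ, P.L - x ≤ P.c4 * τ → P.cc x τ ≤ P.L := by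
    intro τ hτ
    nlinarith [hcc4 τ, hc4, mul_le_mul_of_nonneg_left hτ hc1.le]
  have hcc0 : ∀ τ : ℝ, τ ≤ s → 0 ≤ P.cc x τ := by
    intro τ h2
    nlinarith [hcc4 τ, hc4, mul_nonneg hc1.le (sub_nonneg.2 hxL),
      mul_le_mul_of_nonneg_left (le_trans h2 hsD) (mul_nonneg hc1.le hc4.le),
      mul_lt_mul_of_pos_left hLD hc4, mul_nonneg (mul_nonneg hc4.le hc4.le) hD.le]
  have hT : P.T3 Ψ x s = P.T3 ψ x s := by
    unfold Params.T3
    congr 1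
    · congr 1
      · congr 1
        · congr 1
          · congr 1
            · exact hψe x s h0x hxL h0s hsD
            · refine intervalIntegral.integral_congr fun τ hτ => ?_
              rw [uIcc_of_le h0s] at hτ
              obtain ⟨hτ1, hτ2⟩ := hτ
              have k1 : P.c1 * τ ≤ P.c1 * s := mul_le_mul_of_nonneg_left hτ2 hc1.le
              have k2 : 0 ≤ P.c1 * τ := mul_nonneg hc1.le hτ1
              rw [hψe (x - P.c1 * τ) (s - τ) (by linarith) (by linarith)
                (by linarith) (by linarith)]
          · refine intervalIntegral.integral_congr fun τ hτ => ?_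
            rw [uIcc_of_le h0Lx] at hτ
            obtain ⟨hτ1, hτ2⟩ := hτ
            have k1 : τ * P.c4 ≤ P.L - x := (le_div_iff₀ hc4).1 hτ2
            have k2 : 0 ≤ P.c4 * τ := mul_nonneg hc4.le hτ1
            rw [hψe (x + P.c4 * τ) (s - τ) (by linarith) (by linarith)
              (by linarith) (by linarith)]
        · refine intervalIntegral.integral_congr fun τ hτ => ?_
          rw [uIcc_of_le hLxs] at hτ
          obtain ⟨hτ1, hτ2⟩ := hτ
          rw [hψe P.L (s - τ) hL.le le_rfl (by linarith) (by linarith [h0Lx])]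
      · refine intervalIntegral.integral_congr fun τ hτ => ?_
        rw [uIcc_of_le h0s] at hτ
        obtain ⟨hτ1, hτ2⟩ := hτ
        have k1 : P.c1 * τ ≤ P.c1 * s := mul_le_mul_of_nonneg_left hτ2 hc1.le
        have k2 : 0 ≤ P.c1 * τ := mul_nonneg hc1.le hτ1
        have k3 : P.c4 * τ ≤ P.c4 * s := mul_le_mul_of_nonneg_left hτ2 hc4.le
        have k4 : 0 ≤ P.c4 * τ := mul_nonneg hc4.le hτ1
        refine intervalIntegral.integral_congr fun y hy => ?_
        have hml : x - P.c1 * τ ≤ min (x + P.c4 * τ) (P.cc x τ) :=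
          le_min (by linarith) (hccub τ)
        rw [uIcc_of_le hml] at hy
        obtain ⟨hy1, hy2⟩ := hy
        have hyL : y ≤ P.L := by
          rcases le_or_gt (x + P.c4 * τ) P.L with hle | hgt
          · linarith [le_trans hy2 (min_le_left (x + P.c4 * τ) (P.cc x τ))]
          · have := hccL τ (by linarith)
            linarith [le_trans hy2 (min_le_right (x + P.c4 * τ) (P.cc x τ))]
        rw [hψe y (s - τ) (by linarith) hyL (by linarith) (by linarith)]
    · refine intervalIntegral.integral_congr fun τ hτ => ?_
      rw [uIcc_of_le hLxs] at hτ
      obtain ⟨hτ1, hτ2⟩ := hτ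
      have k1 : P.L - x ≤ τ * P.c4 := (div_le_iff₀ hc4).1 hτ1
      have hccLτ : P.cc x τ ≤ P.L := hccL τ (by linarith)
      refine intervalIntegral.integral_congr fun y hy => ?_
      rw [uIcc_of_le hccLτ] at hy
      obtain ⟨hy1, hy2⟩ := hy
      rw [hψe y (s - τ) (by linarith [hcc0 τ hτ2]) hy2 (by linarith) (by linarith [h0Lx])]
  have hZ : P.Z3 Z x s = P.Z3 z x s := by
    unfold Params.Z3
    have hccLs : P.cc x s ≤ P.L := hccL s (by linarith)
    have hcc0s : 0 ≤ P.cc x s := hcc0 s le_rfl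
    congr 1
    · congr 1
      · rw [hze (x - P.c1 * s) hxs1 (by linarith)]
      · refine intervalIntegral.integral_congr fun y hy => ?_
        rw [uIcc_of_le hccLs] at hy
        obtain ⟨hy1, hy2⟩ := hy
        rw [hze y (by linarith) hy2]
    · refine intervalIntegral.integral_congr fun y hy => ?_
      rw [uIcc_of_le (hccub s)] at hy
      obtain ⟨hy1, hy2⟩ := hy
      rw [hze y (by linarith) (by linarith)]
  have hV : V P.L = v P.L := hve P.L hL.le le_rfl
  rw [hT, hZ, hV]

end BSCongr2

set_option maxHeartbeats 1000000 in
lemma bs_main (P : Params) (hP : P.Pos) (ψ Ψ : ℝ → ℝ → ℝ) (z v Z V : ℝ → ℝ)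
    (hΨc : Continuous fun p : ℝ × ℝ => Ψ p.1 p.2) (hZc : Continuous Z) (hVc : Continuous V)
    (hψe : ∀ a b, 0 ≤ a → a ≤ P.L → 0 ≤ b → b ≤ P.D → Ψ a b = ψ a b)
    (hze : ∀ a, 0 ≤ a → a ≤ P.L → Z a = z a)
    (hve : ∀ a, 0 ≤ a → a ≤ P.L → V a = v a)
    (hZV : Z 0 = -P.c7 * V 0) :
    ContinuousOn (fun p : ℝ × ℝ => P.beta ψ z v p.1 p.2) (Icc 0 P.L ×ˢ Icc 0 P.D) := by
  obtain ⟨hL, hD, hc1, hc2, hc3, hc4, hc5, hc6, hc7, hk, hLD⟩ := id hP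
  have hKc : IsClosed (Icc (0:ℝ) P.L ×ˢ Icc (0:ℝ) P.D) := isClosed_Icc.prod isClosed_Icc
  have h1c : IsClosed ({p : ℝ × ℝ | p.1 ≤ P.c1 * p.2} ∩ (Icc 0 P.L ×ˢ Icc 0 P.D)) :=
    (isClosed_le (by fun_prop) (by fun_prop)).inter hKc
  have h2c : IsClosed ({p : ℝ × ℝ | P.c1 * p.2 ≤ p.1 ∧ p.1 ≤ P.L - P.c4 * p.2} ∩
      (Icc 0 P.L ×ˢ Icc 0 P.D)) := by
    have k1 : IsClosed {p : ℝ × ℝ | P.c1 * p.2 ≤ p.1} := isClosed_le (by fun_prop) (by fun_prop)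
    have k2 : IsClosed {p : ℝ × ℝ | p.1 ≤ P.L - P.c4 * p.2} :=
      isClosed_le (by fun_prop) (by fun_prop)
    exact (k1.inter k2).inter hKc
  have h3c : IsClosed ({p : ℝ × ℝ | P.L - P.c4 * p.2 ≤ p.1} ∩ (Icc 0 P.L ×ˢ Icc 0 P.D)) :=
    (isClosed_le (by fun_prop) (by fun_prop)).inter hKc
  have hA1 : ContinuousOn (fun p : ℝ × ℝ => P.beta ψ z v p.1 p.2)
      ({p : ℝ × ℝ | p.1 ≤ P.c1 * p.2} ∩ (Icc 0 P.L ×ˢ Icc 0 P.D)) := by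
    refine ContinuousOn.congr (f := fun p : ℝ × ℝ =>
      P.T1 Ψ p.1 p.2 + P.Z1 Z p.1 p.2 + P.Y1 V p.1 p.2) ?_ ?_
    · exact (((bs_contT1 P hΨc).add (bs_contZ1 P hZc)).add (bs_contY1 P hVc)).continuousOn
    · rintro ⟨x, s⟩ ⟨hr, ⟨h0x, hxL⟩, h0s, hsD⟩
      have hr' : x ≤ P.c1 * s := hr
      show P.beta ψ z v x s = P.T1 Ψ x s + P.Z1 Z x s + P.Y1 V x s
      rw [Params.beta, if_pos hr']
      exact (bs_congrR1 P hP hψe hze hve h0x hsD hr').symm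
  have hA2 : ContinuousOn (fun p : ℝ × ℝ => P.beta ψ z v p.1 p.2)
      ({p : ℝ × ℝ | P.c1 * p.2 ≤ p.1 ∧ p.1 ≤ P.L - P.c4 * p.2} ∩
        (Icc 0 P.L ×ˢ Icc 0 P.D)) := by
    refine ContinuousOn.congr (f := fun p : ℝ × ℝ =>
      P.T2 Ψ p.1 p.2 + P.Z2 Z p.1 p.2 + P.Y2 V p.1 p.2) ?_ ?_
    · exact (((bs_contT2 P hΨc).add (bs_contZ2 P hZc)).add (bs_contY2 P hVc)).continuousOn
    · rintro ⟨x, s⟩ ⟨⟨hr1, hr2⟩, ⟨h0x, hxL⟩, h0s, hsD⟩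
      have hr1' : P.c1 * s ≤ x := hr1
      have hr2' : x ≤ P.L - P.c4 * s := hr2
      show P.beta ψ z v x s = P.T2 Ψ x s + P.Z2 Z x s + P.Y2 V x s
      rcases eq_or_lt_of_le hr1' with heq | hlt
      · subst heq
        rw [Params.beta, if_pos le_rfl]
        exact ((bs_congrR1 P hP hψe hze hve (mul_nonneg hc1.le h0s) hsD le_rfl).symm).trans
          (bs_match12 P hP Ψ Z V hZV h0s)
      · rw [Params.beta, if_neg (not_le.2 hlt), if_pos hr2']
        exact (bs_congrR2 P hP hψe hze hve h0s hsD hr1' hr2').symm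
  have hA3 : ContinuousOn (fun p : ℝ × ℝ => P.beta ψ z v p.1 p.2)
      ({p : ℝ × ℝ | P.L - P.c4 * p.2 ≤ p.1} ∩ (Icc 0 P.L ×ˢ Icc 0 P.D)) := by
    refine ContinuousOn.congr (f := fun p : ℝ × ℝ =>
      P.T3 Ψ p.1 p.2 + P.Z3 Z p.1 p.2 - P.k / P.c6 * V P.L) ?_ ?_
    · exact (((bs_contT3 P hΨc).add (bs_contZ3 P hZc)).sub continuous_const).continuousOn
    · rintro ⟨x, s⟩ ⟨hr, ⟨h0x, hxL⟩, h0s, hsD⟩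
      have hr' : P.L - P.c4 * s ≤ x := hr
      have hnot1 : ¬ x ≤ P.c1 * s := by
        have k : (P.c1 + P.c4) * s ≤ (P.c1 + P.c4) * P.D :=
          mul_le_mul_of_nonneg_left hsD (by positivity)
        push_neg
        nlinarith
      show P.beta ψ z v x s = P.T3 Ψ x s + P.Z3 Z x s - P.k / P.c6 * V P.L
      rcases eq_or_lt_of_le hr' with heq | hlt
      · subst heq
        rw [Params.beta, if_neg hnot1, if_pos le_rfl]
        exact ((bs_congrR2 P hP hψe hze hve h0s hsD (lt_of_not_ge hnot1).le le_rfl).symm).trans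
          (bs_match23 P hP Ψ Z V h0s)
      · rw [Params.beta, if_neg hnot1, if_neg (not_le.2 hlt)]
        exact (bs_congrR3 P hP hψe hze hve h0s hsD hr' hxL).symm
  have hAll : ContinuousOn (fun p : ℝ × ℝ => P.beta ψ z v p.1 p.2)
      (({p : ℝ × ℝ | p.1 ≤ P.c1 * p.2} ∩ (Icc 0 P.L ×ˢ Icc 0 P.D)) ∪
        (({p : ℝ × ℝ | P.c1 * p.2 ≤ p.1 ∧ p.1 ≤ P.L - P.c4 * p.2} ∩
            (Icc 0 P.L ×ˢ Icc 0 P.D)) ∪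
          ({p : ℝ × ℝ | P.L - P.c4 * p.2 ≤ p.1} ∩ (Icc 0 P.L ×ˢ Icc 0 P.D)))) :=
    bs_paste h1c (h2c.union h3c) hA1 (bs_paste h2c h3c hA2 hA3)
  refine hAll.mono fun p hp => ?_
  rcases le_total p.1 (P.c1 * p.2) with h | h
  · exact Or.inl ⟨h, hp⟩
  · rcases le_total p.1 (P.L - P.c4 * p.2) with h' | h'
    · exact Or.inr (Or.inl ⟨⟨h, h'⟩, hp⟩)
    · exact Or.inr (Or.inr ⟨h', hp⟩)

/-- The backstepping transform of continuous data satisfying the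
compatibility condition `z 0 = -c7 * v 0` is continuous on `[0,L] × [0,D]`. -/
theorem backstepping_transform_continuous (P : Params) (hP : P.Pos)
    (ψ : ℝ → ℝ → ℝ) (z v : ℝ → ℝ)
    (hψ : ContinuousOn (fun p : ℝ × ℝ => ψ p.1 p.2) (Icc 0 P.L ×ˢ Icc 0 P.D))
    (hz : ContinuousOn z (Icc 0 P.L)) (hv : ContinuousOn v (Icc 0 P.L))
    (hcomp : z 0 = -P.c7 * v 0) :
    ContinuousOn (fun p : ℝ × ℝ => P.beta ψ z v p.1 p.2)
      (Icc 0 P.L ×ˢ Icc 0 P.D) := by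
  obtain ⟨hL, hD, hc1, hc2, hc3, hc4, hc5, hc6, hc7, hk, hLD⟩ := id hP
  refine bs_main P hP ψ (fun a b => ψ (max 0 (min a P.L)) (max 0 (min b P.D))) z v
    (fun a => z (max 0 (min a P.L))) (fun a => v (max 0 (min a P.L)))
    ?_ ?_ ?_ ?_ ?_ ?_ ?_
  · exact hψ.comp_continuous
      (f := fun p : ℝ × ℝ => (max 0 (min p.1 P.L), max 0 (min p.2 P.D)))
      (by fun_prop)
      (fun p => ⟨⟨le_max_left _ _, max_le hL.le (min_le_right _ _)⟩,
        ⟨le_max_left _ _, max_le hD.le (min_le_right _ _)⟩⟩)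
  · exact hz.comp_continuous (by fun_prop)
      (fun a => ⟨le_max_left _ _, max_le hL.le (min_le_right _ _)⟩)
  · exact hv.comp_continuous (by fun_prop)
      (fun a => ⟨le_max_left _ _, max_le hL.le (min_le_right _ _)⟩)
  · intro a b h1 h2 h3 h4
    show ψ (max 0 (min a P.L)) (max 0 (min b P.D)) = ψ a b
    rw [min_eq_left h2, max_eq_right h1, min_eq_left h4, max_eq_right h3]
  · intro a h1 h2
    show z (max 0 (min a P.L)) = z a
    rw [min_eq_left h2, max_eq_right h1]
  · intro a h1 h2
    show v (max 0 (min a P.L)) = v a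
    rw [min_eq_left h2, max_eq_right h1]
  · show z (max 0 (min 0 P.L)) = -P.c7 * v (max 0 (min 0 P.L))
    rw [min_eq_left hL.le, max_self]
    exact hcomp
end
end

section
/- For all continuous functions ψ : [0,L]×[0,D]→ℝ, z : [0,L]→ℝ, v : [0,L]→ℝ satisfying z(0) = −c7·v(0), and for every s∈[0,D], the two branch formulas of the backstepping transform agree along the line x = c1·s: T1[ψ](c1·s, s) + Z1[z](c1·s, s) + Y1[v](c1·s, s) = T2[ψ](c1·s, s) + Z2[z](c1·s, s) + Y2[v](c1·s, s). -/
open Set MeasureTheory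

noncomputable section

/-- The first two branch formulas of the backstepping transform agree
along the line `x = c1 * s`, given the compatibility condition `z 0 = -c7 * v 0`. -/
theorem backstepping_branches_agree_first (P : Params) (hP : P.Pos)
    (ψ : ℝ → ℝ → ℝ) (z v : ℝ → ℝ)
    (hψ : ContinuousOn (fun p : ℝ × ℝ => ψ p.1 p.2) (Icc 0 P.L ×ˢ Icc 0 P.D))
    (hz : ContinuousOn z (Icc 0 P.L)) (hv : ContinuousOn v (Icc 0 P.L))
    (hcomp : z 0 = -P.c7 * v 0) :
    ∀ s ∈ Icc (0:ℝ) P.D,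
      P.T1 ψ (P.c1 * s) s + P.Z1 z (P.c1 * s) s + P.Y1 v (P.c1 * s) s
        = P.T2 ψ (P.c1 * s) s + P.Z2 z (P.c1 * s) s + P.Y2 v (P.c1 * s) s := by
  intro s hs
  obtain ⟨hL, hD, hc1, hc2, hc3, hc4, hc5, hc6, hc7, hk, hLD⟩ := hP
  have hx : P.c1 * s / P.c1 = s := by field_simp
  have hmax : (∫ τ in (0:ℝ)..s,
      ∫ y in (max (P.c1 * s - P.c1 * τ) (P.c4 * (τ - s)))..(P.c1 * s + P.c4 * τ),
        P.gk (P.c1 * s) y τ * ψ y (s - τ))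
      = ∫ τ in (0:ℝ)..s,
      ∫ y in (P.c1 * s - P.c1 * τ)..(P.c1 * s + P.c4 * τ),
        P.gk (P.c1 * s) y τ * ψ y (s - τ) := by
    apply intervalIntegral.integral_congr
    intro τ hτ
    rw [Set.uIcc_of_le hs.1] at hτ
    have : max (P.c1 * s - P.c1 * τ) (P.c4 * (τ - s)) = P.c1 * s - P.c1 * τ := by
      rw [max_eq_left]
      nlinarith [hτ.1, hτ.2]
    simp only [this]
  unfold Params.T1 Params.T2 Params.Z1 Params.Z2 Params.Y1 Params.Y2
  rw [hx, hmax]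
  simp only [sub_self, mul_zero, intervalIntegral.integral_same,
    intervalIntegral.integral_zero]
  rw [hcomp]
  ring
end
end

section
/- Assume the coefficient relation c1·c2·c6 = c3·c5. Let z, v : [0,L]×[0,∞)→ℝ and ψ : [0,L]×[0,D]×[0,∞)→ℝ be continuously differentiable functions satisfying the plant equations: ∂_t z(x,t) = −c1·∂_x z(x,t) − c3·exp(c2·x)·ψ(x,0,t) and ∂_t v(x,t) = c4·∂_x v(x,t) − c5·exp(−c2·x)·z(x,t) − c6·ψ(x,0,t) for x∈(0,L) and t>0; z(0,t) = −c7·v(0,t); and ∂_t v(L,t) = −c5·exp(−c2·L)·z(L,t) − c6·ψ(L,0,t). For each t let β(·,·,t) be the backstepping transform of (ψ(·,·,t), z(·,t), v(·,t)); in particular, β(x,0,t) = ψ(x,0,t) + (c5/c6)·exp(−c2·x)·z(x,t) − (k/c6)·v(x,t) for x∈(0,L]. Then for all t > 0: ∂_t z(x,t) = −c1·∂_x z(x,t) + c1·c2·z(x,t) − c3·exp(c2·x)·β(x,0,t) − (k·c3/c6)·exp(c2·x)·v(x,t) for x∈(0,L); ∂_t v(x,t) = c4·∂_x v(x,t) −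 c6·β(x,0,t) − k·v(x,t) for x∈(0,L); and ∂_t v(L,t) = −k·v(L,t) − c6·β(L,0,t); i.e., (z,v) satisfy the target-system equations. -/
open Set MeasureTheory

noncomputable section

lemma Params.beta_zero (P : Params) (hP : P.Pos) (ψ : ℝ → ℝ → ℝ) (z v : ℝ → ℝ)
    {x : ℝ} (hx0 : 0 < x) (hxL : x ≤ P.L) :
    P.beta ψ z v x 0 =
      ψ x 0 + P.c5 / P.c6 * Real.exp (-(P.c2 * x)) * z x - P.k / P.c6 * v x := by
  have h1 : ¬ x ≤ P.c1 * 0 := by simp [not_le]; linarith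
  have h2 : x ≤ P.L - P.c4 * 0 := by simpa using hxL
  rw [Params.beta, if_neg h1, if_pos h2]
  simp [Params.T2, Params.Z2, Params.Y2, intervalIntegral.integral_same]
  ring

/-- The backstepping transformation maps the plant into the target
system: evaluating the transform at `s = 0` gives
`β(x,0,t) = ψ(x,0,t) + (c5/c6) e^{-c2 x} z(x,t) - (k/c6) v(x,t)` for `x ∈ (0,L]`, and
`(z,v)` satisfy the target-system equations. -/
theorem plant_maps_to_target (P : Params) (hP : P.Pos)
    (hc' : P.c1 * P.c2 * P.c6 = P.c3 * P.c5)
    (z v : ℝ → ℝ → ℝ) (ψ : ℝ → ℝ → ℝ → ℝ)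
    (hz : ContDiffOn ℝ 1 (fun p : ℝ × ℝ => z p.1 p.2) (Icc 0 P.L ×ˢ Ici 0))
    (hv : ContDiffOn ℝ 1 (fun p : ℝ × ℝ => v p.1 p.2) (Icc 0 P.L ×ˢ Ici 0))
    (hψ : ContDiffOn ℝ 1 (fun p : ℝ × ℝ × ℝ => ψ p.1 p.2.1 p.2.2)
      (Icc 0 P.L ×ˢ Icc 0 P.D ×ˢ Ici 0))
    (hzpde : ∀ x ∈ Ioo (0:ℝ) P.L, ∀ t > (0:ℝ),
      deriv (fun t' => z x t') t =
        -P.c1 * deriv (fun x' => z x' t) x - P.c3 * Real.exp (P.c2 * x) * ψ x 0 t)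
    (hvpde : ∀ x ∈ Ioo (0:ℝ) P.L, ∀ t > (0:ℝ),
      deriv (fun t' => v x t') t =
        P.c4 * deriv (fun x' => v x' t) x - P.c5 * Real.exp (-(P.c2 * x)) * z x t
          - P.c6 * ψ x 0 t)
    (hbc0 : ∀ t ≥ (0:ℝ), z 0 t = -P.c7 * v 0 t)
    (hbcL : ∀ t > (0:ℝ),
      deriv (fun t' => v P.L t') t =
        -P.c5 * Real.exp (-(P.c2 * P.L)) * z P.L t - P.c6 * ψ P.L 0 t) :
    ∀ t > (0:ℝ),
      (∀ x ∈ Ioc (0:ℝ) P.L,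
        P.beta (fun x' s' => ψ x' s' t) (fun x' => z x' t) (fun x' => v x' t) x 0
          = ψ x 0 t + P.c5 / P.c6 * Real.exp (-(P.c2 * x)) * z x t
              - P.k / P.c6 * v x t) ∧
      (∀ x ∈ Ioo (0:ℝ) P.L,
        deriv (fun t' => z x t') t =
          -P.c1 * deriv (fun x' => z x' t) x + P.c1 * P.c2 * z x t
            - P.c3 * Real.exp (P.c2 * x) *
                P.beta (fun x' s' => ψ x' s' t) (fun x' => z x' t) (fun x' => v x' t) x 0
            - P.k * P.c3 / P.c6 * Real.exp (P.c2 * x) * v x t) ∧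
      (∀ x ∈ Ioo (0:ℝ) P.L,
        deriv (fun t' => v x t') t =
          P.c4 * deriv (fun x' => v x' t) x
            - P.c6 *
                P.beta (fun x' s' => ψ x' s' t) (fun x' => z x' t) (fun x' => v x' t) x 0
            - P.k * v x t) ∧
      deriv (fun t' => v P.L t') t =
        -P.k * v P.L t
          - P.c6 *
              P.beta (fun x' s' => ψ x' s' t) (fun x' => z x' t) (fun x' => v x' t)
                P.L 0 := by

  intro t ht
  have hβ : ∀ x, 0 < x → x ≤ P.L →
      P.beta (fun x' s' => ψ x' s' t) (fun x' => z x' t) (fun x' => v x' t) x 0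
        = ψ x 0 t + P.c5 / P.c6 * Real.exp (-(P.c2 * x)) * z x t
            - P.k / P.c6 * v x t := fun x hx0 hxL =>
    P.beta_zero hP _ _ _ hx0 hxL
  have hc6 : P.c6 ≠ 0 := ne_of_gt hP.2.2.2.2.2.2.2.1
  refine ⟨fun x hx => hβ x hx.1 hx.2, fun x hx => ?_, fun x hx => ?_, ?_⟩
  · rw [hβ x hx.1 hx.2.le, hzpde x hx t ht]
    have hE : Real.exp (P.c2 * x) * Real.exp (-(P.c2 * x)) = 1 := by
      rw [← Real.exp_add]; simp
    field_simp
    linear_combination (P.c3 * P.c5 * z x t) * hE - z x t * hc'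
  · rw [hβ x hx.1 hx.2.le, hvpde x hx t ht]
    field_simp
    ring
  · rw [hβ P.L hP.1 le_rfl, hbcL t ht]
    field_simp
    ring
end
end

section
/- Assume the coefficient relation c2·c4 = c5·c7. For all continuous functions β : [0,L]×[0,D]→ℝ, z : [0,L]→ℝ, v : [0,L]→ℝ satisfying z(0) = −c7·v(0), and every s∈[0,D], the first two branch formulas of the inverse transform agree along the line x = c1·s: Q1[β](c1·s, s) + R1[v](c1·s, s) = Q2[β](c1·s, s) + R2[v](c1·s, s) + 𝓑[z](c1·s, s). -/
open Set MeasureTheory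

noncomputable section

/-- The first two branch formulas of the inverse transform agree
along the line `x = c1 * s`. -/
theorem inverse_branches_agree (P : Params) (hP : P.Pos)
    (hc : P.c2 * P.c4 = P.c5 * P.c7)
    (β : ℝ → ℝ → ℝ) (z v : ℝ → ℝ)
    (hβ : ContinuousOn (fun p : ℝ × ℝ => β p.1 p.2) (Icc 0 P.L ×ˢ Icc 0 P.D))
    (hz : ContinuousOn z (Icc 0 P.L)) (hv : ContinuousOn v (Icc 0 P.L))
    (hcomp : z 0 = -P.c7 * v 0) :
    ∀ s ∈ Icc (0:ℝ) P.D,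
      P.Q1 β (P.c1 * s) s + P.R1 v (P.c1 * s) s
        = P.Q2 β (P.c1 * s) s + P.R2 v (P.c1 * s) s + P.Binv z (P.c1 * s) s := by
  intro s _
  have hc1 : P.c1 ≠ 0 := ne_of_gt hP.2.2.1
  have hx : P.c1 * s / P.c1 = s := by field_simp
  have hxm : P.c1 * s - P.c1 * s = 0 := by ring
  have hs0 : P.c4 * (s - s) = 0 := by ring
  unfold Params.Q1 Params.Q2 Params.R1 Params.R2 Params.Binv
  rw [hx, hxm, hs0, intervalIntegral.integral_same, intervalIntegral.integral_same,
    hcomp]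
  simp only [sub_self, mul_zero, Real.exp_zero]
  linear_combination (v 0 / P.c6) * hc
end
end

section
/- Let σ > 0 and E = exp(c2·L). For all continuously differentiable functions z, v : [0,L]→ℝ and continuous β0 : [0,L]→ℝ satisfying z(0) = −c7·v(0), the quantity I := −2·∫₀^L c1·exp(−σ·x)·z(x)·z′(x) dx + 2·∫₀^L c1·c2·exp(−σ·x)·z(x)² dx − 2·∫₀^L c3·exp((c2−σ)·x)·z(x)·β0(x) dx − 2·∫₀^L (k·c3/c6)·exp((c2−σ)·x)·z(x)·v(x) dx satisfies I ≤ (2·E·k·c3/c6)·∫₀^L exp(σ·x)·v(x)² dx + c1·c7²·v(0)² − (c1·σ − 2·c1·c2 − E·c3/2 − E·k·c3/(2·c6))·∫₀^L exp(−σ·x)·z(x)² dx + 2·E·c3·∫₀^L exp(σ·x)·β0(x)² dx. -/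
open Set MeasureTheory

noncomputable section

private lemma young_aux (c θ a b : ℝ) (hc : 0 ≤ c) (hθ : 0 < θ) :
    -(2 * c * (a * b)) ≤ c * θ * a ^ 2 + c / θ * b ^ 2 := by
  have hθ' : θ ≠ 0 := hθ.ne'
  have h := mul_nonneg (div_nonneg hc hθ.le) (sq_nonneg (θ * a + b))
  have h2 : c / θ * (θ * a + b) ^ 2 = c * θ * a ^ 2 + 2 * c * (a * b) + c / θ * b ^ 2 := by
    field_simp
    ring
  rw [h2] at h
  linarith

/-- Bound on the term `I(t)` in the Lyapunov computation. -/
theorem lyapunov_term_I_bound (P : Params) (hP : P.Pos)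
    (σ : ℝ) (hσ : 0 < σ)
    (z v : ℝ → ℝ) (β0 : ℝ → ℝ)
    (hz : ContDiffOn ℝ 1 z (Icc 0 P.L)) (hv : ContDiffOn ℝ 1 v (Icc 0 P.L))
    (hβ0 : ContinuousOn β0 (Icc 0 P.L))
    (hcomp : z 0 = -P.c7 * v 0)
    (I : ℝ)
    (hI : I = -2 * (∫ x in (0:ℝ)..P.L,
          P.c1 * Real.exp (-σ * x) * z x * derivWithin z (Icc 0 P.L) x)
        + 2 * (∫ x in (0:ℝ)..P.L, P.c1 * P.c2 * Real.exp (-σ * x) * z x ^ 2)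
        - 2 * (∫ x in (0:ℝ)..P.L,
            P.c3 * Real.exp ((P.c2 - σ) * x) * z x * β0 x)
        - 2 * ∫ x in (0:ℝ)..P.L,
            P.k * P.c3 / P.c6 * Real.exp ((P.c2 - σ) * x) * z x * v x) :
    I ≤ 2 * Real.exp (P.c2 * P.L) * P.k * P.c3 / P.c6 *
          (∫ x in (0:ℝ)..P.L, Real.exp (σ * x) * v x ^ 2)
        + P.c1 * P.c7 ^ 2 * v 0 ^ 2
        - (P.c1 * σ - 2 * P.c1 * P.c2 - Real.exp (P.c2 * P.L) * P.c3 / 2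
            - Real.exp (P.c2 * P.L) * P.k * P.c3 / (2 * P.c6)) *
          (∫ x in (0:ℝ)..P.L, Real.exp (-σ * x) * z x ^ 2)
        + 2 * Real.exp (P.c2 * P.L) * P.c3 *
          ∫ x in (0:ℝ)..P.L, Real.exp (σ * x) * β0 x ^ 2 := by
  obtain ⟨hL, hD, hc1, hc2, hc3, hc4, hc5, hc6, hc7, hk, hLD⟩ := hP
  have hL0 : (0:ℝ) ≤ P.L := hL.le
  set E := Real.exp (P.c2 * P.L) with hEdef
  have hE : (0:ℝ) < E := Real.exp_pos _
  set z' := derivWithin z (Icc 0 P.L) with hz'def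
  have hzc : ContinuousOn z (Icc 0 P.L) := hz.continuousOn
  have hz'c : ContinuousOn z' (Icc 0 P.L) :=
    hz.continuousOn_derivWithin (uniqueDiffOn_Icc hL) le_rfl
  have hvc : ContinuousOn v (Icc 0 P.L) := hv.continuousOn
  have hexpc : ∀ c : ℝ, Continuous fun x : ℝ => Real.exp (c * x) := fun c =>
    Real.continuous_exp.comp (continuous_const.mul continuous_id)
  -- integrability facts
  have hIz : IntervalIntegrable (fun x => Real.exp (-σ * x) * z x ^ 2) volume 0 P.L :=
    ((hexpc (-σ)).continuousOn.mul (hzc.pow 2)).intervalIntegrable_of_Icc hL0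
  have hIv : IntervalIntegrable (fun x => Real.exp (σ * x) * v x ^ 2) volume 0 P.L :=
    ((hexpc σ).continuousOn.mul (hvc.pow 2)).intervalIntegrable_of_Icc hL0
  have hIb : IntervalIntegrable (fun x => Real.exp (σ * x) * β0 x ^ 2) volume 0 P.L :=
    ((hexpc σ).continuousOn.mul (hβ0.pow 2)).intervalIntegrable_of_Icc hL0
  have hI1 : IntervalIntegrable
      (fun x => P.c1 * Real.exp (-σ * x) * z x * z' x) volume 0 P.L :=
    (((continuousOn_const.mul (hexpc (-σ)).continuousOn).mul hzc).mul
      hz'c).intervalIntegrable_of_Icc hL0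
  have hI3 : IntervalIntegrable
      (fun x => -2 * (P.c3 * Real.exp ((P.c2 - σ) * x) * z x * β0 x)) volume 0 P.L :=
    (continuousOn_const.mul (((continuousOn_const.mul
      (hexpc (P.c2 - σ)).continuousOn).mul hzc).mul hβ0)).intervalIntegrable_of_Icc hL0
  have hI4 : IntervalIntegrable
      (fun x => -2 * (P.k * P.c3 / P.c6 * Real.exp ((P.c2 - σ) * x) * z x * v x))
      volume 0 P.L :=
    (continuousOn_const.mul (((continuousOn_const.mul
      (hexpc (P.c2 - σ)).continuousOn).mul hzc).mul hvc)).intervalIntegrable_of_Icc hL0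
  set Jz := ∫ x in (0:ℝ)..P.L, Real.exp (-σ * x) * z x ^ 2 with hJzdef
  set Jv := ∫ x in (0:ℝ)..P.L, Real.exp (σ * x) * v x ^ 2 with hJvdef
  set Jb := ∫ x in (0:ℝ)..P.L, Real.exp (σ * x) * β0 x ^ 2 with hJbdef
  -- integration by parts (FTC) for the first term
  have hderivF : ∀ x ∈ Ioo (0:ℝ) P.L,
      HasDerivAt (fun y => P.c1 / 2 * (Real.exp (-σ * y) * z y ^ 2))
        (P.c1 * Real.exp (-σ * x) * z x * z' x
          - P.c1 * σ / 2 * (Real.exp (-σ * x) * z x ^ 2)) x := by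
    intro x hx
    have hmem : Icc (0:ℝ) P.L ∈ nhds x := Icc_mem_nhds hx.1 hx.2
    have hzd : HasDerivAt z (z' x) x := by
      have h1 : DifferentiableWithinAt ℝ z (Icc 0 P.L) x :=
        (hz.differentiableOn one_ne_zero) x (Ioo_subset_Icc_self hx)
      exact h1.hasDerivWithinAt.hasDerivAt hmem
    have hexd : HasDerivAt (fun y => Real.exp (-σ * y)) (-σ * Real.exp (-σ * x)) x := by
      have h := ((hasDerivAt_id x).const_mul (-σ)).exp
      simpa [mul_comm] using h
    have h := (hexd.mul (hzd.pow 2)).const_mul (P.c1 / 2)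
    convert h using 1
    · rfl
    · rfl
    · simp
    · simp
      ring
  have hFTC : ∫ x in (0:ℝ)..P.L,
      (P.c1 * Real.exp (-σ * x) * z x * z' x
        - P.c1 * σ / 2 * (Real.exp (-σ * x) * z x ^ 2))
      = P.c1 / 2 * (Real.exp (-σ * P.L) * z P.L ^ 2)
        - P.c1 / 2 * (Real.exp (-σ * 0) * z 0 ^ 2) := by
    have h := intervalIntegral.integral_eq_sub_of_hasDeriv_right_of_le
      (f := fun y => P.c1 / 2 * (Real.exp (-σ * y) * z y ^ 2))
      (f' := fun x => P.c1 * Real.exp (-σ * x) * z x * z' x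
        - P.c1 * σ / 2 * (Real.exp (-σ * x) * z x ^ 2)) hL0
      (continuousOn_const.mul ((hexpc (-σ)).continuousOn.mul (hzc.pow 2)))
      (fun x hx => (hderivF x hx).hasDerivWithinAt)
      (hI1.sub (hIz.const_mul _))
    simpa using h
  have hJ1 : ∫ x in (0:ℝ)..P.L, P.c1 * Real.exp (-σ * x) * z x * z' x
      = P.c1 / 2 * (Real.exp (-σ * P.L) * z P.L ^ 2) - P.c1 / 2 * z 0 ^ 2
        + P.c1 * σ / 2 * Jz := by
    rw [intervalIntegral.integral_sub hI1 (hIz.const_mul _),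
      intervalIntegral.integral_const_mul] at hFTC
    simp only [mul_zero, neg_zero, Real.exp_zero, one_mul] at hFTC
    linarith
  have hJ2 : ∫ x in (0:ℝ)..P.L, P.c1 * P.c2 * Real.exp (-σ * x) * z x ^ 2
      = P.c1 * P.c2 * Jz := by
    rw [hJzdef, ← intervalIntegral.integral_const_mul]
    apply intervalIntegral.integral_congr
    intro x _
    ring
  -- pointwise Young bounds
  have hexpbd : ∀ x ∈ Icc (0:ℝ) P.L,
      Real.exp ((2 * P.c2 - σ) * x) ≤ E ^ 2 * Real.exp (σ * x) := by
    intro x hx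
    have h1 : E ^ 2 * Real.exp (σ * x)
        = Real.exp (P.c2 * P.L + (P.c2 * P.L + σ * x)) := by
      rw [Real.exp_add, Real.exp_add, ← hEdef]; ring
    rw [h1]
    apply Real.exp_le_exp.mpr
    nlinarith [hx.1, hx.2, hc2, hσ]
  have hptw : ∀ (c : ℝ), 0 ≤ c → ∀ x ∈ Icc (0:ℝ) P.L, ∀ w : ℝ → ℝ,
      -2 * (c * Real.exp ((P.c2 - σ) * x) * z x * w x)
        ≤ E * c / 2 * (Real.exp (-σ * x) * z x ^ 2)
          + 2 * E * c * (Real.exp (σ * x) * w x ^ 2) := by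
    intro c hc x hx w
    have hsplit : Real.exp ((P.c2 - σ) * x)
        = Real.exp (-σ * x / 2) * Real.exp ((P.c2 - σ / 2) * x) := by
      rw [← Real.exp_add]; congr 1; ring
    have hy := young_aux c (E / 2) (Real.exp (-σ * x / 2) * z x)
      (Real.exp ((P.c2 - σ / 2) * x) * w x) hc (by positivity)
    have hexp_sq : ∀ a : ℝ, Real.exp a ^ 2 = Real.exp (2 * a) := fun a => by
      rw [pow_two, ← Real.exp_add, two_mul]
    have hsq1 : (Real.exp (-σ * x / 2) * z x) ^ 2 = Real.exp (-σ * x) * z x ^ 2 := by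
      rw [mul_pow, hexp_sq, show 2 * (-σ * x / 2) = -σ * x from by ring]
    have hsq2 : (Real.exp ((P.c2 - σ / 2) * x) * w x) ^ 2
        = Real.exp ((2 * P.c2 - σ) * x) * w x ^ 2 := by
      rw [mul_pow, hexp_sq, show 2 * ((P.c2 - σ / 2) * x) = (2 * P.c2 - σ) * x from by ring]
    rw [hsq1, hsq2] at hy
    have hlhs : -2 * (c * Real.exp ((P.c2 - σ) * x) * z x * w x)
        = -(2 * c * ((Real.exp (-σ * x / 2) * z x)
            * (Real.exp ((P.c2 - σ / 2) * x) * w x))) := by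
      rw [hsplit]; ring
    have hstep : c / (E / 2) * (Real.exp ((2 * P.c2 - σ) * x) * w x ^ 2)
        ≤ 2 * E * c * (Real.exp (σ * x) * w x ^ 2) := by
      have h1 : Real.exp ((2 * P.c2 - σ) * x) * w x ^ 2
          ≤ (E ^ 2 * Real.exp (σ * x)) * w x ^ 2 :=
        mul_le_mul_of_nonneg_right (hexpbd x hx) (sq_nonneg _)
      have h2 : c / (E / 2) * ((E ^ 2 * Real.exp (σ * x)) * w x ^ 2)
          = 2 * E * c * (Real.exp (σ * x) * w x ^ 2) := by
        field_simp
      calc c / (E / 2) * (Real.exp ((2 * P.c2 - σ) * x) * w x ^ 2)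
          ≤ c / (E / 2) * ((E ^ 2 * Real.exp (σ * x)) * w x ^ 2) :=
            mul_le_mul_of_nonneg_left h1 (by positivity)
        _ = 2 * E * c * (Real.exp (σ * x) * w x ^ 2) := h2
    have hcoef : c * (E / 2) = E * c / 2 := by ring
    rw [hlhs]
    calc -(2 * c * ((Real.exp (-σ * x / 2) * z x)
          * (Real.exp ((P.c2 - σ / 2) * x) * w x)))
        ≤ c * (E / 2) * (Real.exp (-σ * x) * z x ^ 2)
          + c / (E / 2) * (Real.exp ((2 * P.c2 - σ) * x) * w x ^ 2) := hy
      _ ≤ E * c / 2 * (Real.exp (-σ * x) * z x ^ 2)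
          + 2 * E * c * (Real.exp (σ * x) * w x ^ 2) := by
        rw [hcoef] at *; linarith
  have hJ3 : -(2 * ∫ x in (0:ℝ)..P.L, P.c3 * Real.exp ((P.c2 - σ) * x) * z x * β0 x)
      ≤ E * P.c3 / 2 * Jz + 2 * E * P.c3 * Jb := by
    have hmono := intervalIntegral.integral_mono_on hL0 hI3
      (((hIz.const_mul (E * P.c3 / 2)).add (hIb.const_mul (2 * E * P.c3))))
      (fun x hx => hptw P.c3 hc3.le x hx β0)
    rw [intervalIntegral.integral_const_mul,
      intervalIntegral.integral_add (hIz.const_mul _) (hIb.const_mul _),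
      intervalIntegral.integral_const_mul, intervalIntegral.integral_const_mul] at hmono
    linarith
  have hJ4 : -(2 * ∫ x in (0:ℝ)..P.L,
        P.k * P.c3 / P.c6 * Real.exp ((P.c2 - σ) * x) * z x * v x)
      ≤ E * (P.k * P.c3 / P.c6) / 2 * Jz + 2 * E * (P.k * P.c3 / P.c6) * Jv := by
    have hmono := intervalIntegral.integral_mono_on hL0 hI4
      (((hIz.const_mul (E * (P.k * P.c3 / P.c6) / 2)).add
        (hIv.const_mul (2 * E * (P.k * P.c3 / P.c6)))))
      (fun x hx => hptw (P.k * P.c3 / P.c6) (by positivity) x hx v)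
    rw [intervalIntegral.integral_const_mul,
      intervalIntegral.integral_add (hIz.const_mul _) (hIv.const_mul _),
      intervalIntegral.integral_const_mul, intervalIntegral.integral_const_mul] at hmono
    linarith
  -- assemble
  have hz0 : z 0 ^ 2 = P.c7 ^ 2 * v 0 ^ 2 := by rw [hcomp]; ring
  have hbdry : 0 ≤ P.c1 * (Real.exp (-σ * P.L) * z P.L ^ 2) := by positivity
  have hc6' : P.c6 ≠ 0 := hc6.ne'
  have hdiv1 : E * (P.k * P.c3 / P.c6) / 2 = E * P.k * P.c3 / (2 * P.c6) := by
    field_simp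
  have hdiv2 : 2 * E * (P.k * P.c3 / P.c6) = 2 * E * P.k * P.c3 / P.c6 := by
    field_simp
  rw [hdiv1, hdiv2] at hJ4
  rw [hI, hJ1, hJ2, hz0]
  linarith [hJ3, hJ4, hbdry]
end
end

section
/- Let σ > 0 and p, k2, k3 > 0. For all continuously differentiable v : [0,L]→ℝ and continuous β0 : [0,L]→ℝ, the quantity II := 2·k2·∫₀^L c4·exp(σ·x)·v(x)·v′(x) dx − 2·k2·k·∫₀^L exp(σ·x)·v(x)² dx − 2·k2·c6·∫₀^L exp(σ·x)·v(x)·β0(x) dx − k3·c6·v(L)·β0(L) − 2·k3·k·v(L)² satisfies II ≤ −k2·(c4·σ − c6/2 + 2·k)·∫₀^L exp(σ·x)·v(x)² dx − k2·c4·v(0)² + 2·k2·c6·∫₀^L exp(σ·x)·β0(x)² dx + (p/2)·k3·c6·β0(L)² − (2·k3·k − k3·c6/(2·p) − k2·c4·exp(σ·L))·v(L)². -/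
open Set MeasureTheory

noncomputable section

set_option maxHeartbeats 1600000 in
/-- Bound on the term `II(t)` in the Lyapunov computation. -/
theorem lyapunov_term_II_bound (P : Params) (hP : P.Pos)
    (σ p k2 k3 : ℝ) (hσ : 0 < σ) (hp : 0 < p) (hk2 : 0 < k2) (hk3 : 0 < k3)
    (v : ℝ → ℝ) (β0 : ℝ → ℝ)
    (hv : ContDiffOn ℝ 1 v (Icc 0 P.L)) (hβ0 : ContinuousOn β0 (Icc 0 P.L))
    (II : ℝ)
    (hII : II = 2 * k2 * (∫ x in (0:ℝ)..P.L,
          P.c4 * Real.exp (σ * x) * v x * derivWithin v (Icc 0 P.L) x)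
        - 2 * k2 * P.k * (∫ x in (0:ℝ)..P.L, Real.exp (σ * x) * v x ^ 2)
        - 2 * k2 * P.c6 * (∫ x in (0:ℝ)..P.L, Real.exp (σ * x) * v x * β0 x)
        - k3 * P.c6 * v P.L * β0 P.L
        - 2 * k3 * P.k * v P.L ^ 2) :
    II ≤ -k2 * (P.c4 * σ - P.c6 / 2 + 2 * P.k) *
          (∫ x in (0:ℝ)..P.L, Real.exp (σ * x) * v x ^ 2)
        - k2 * P.c4 * v 0 ^ 2
        + 2 * k2 * P.c6 * (∫ x in (0:ℝ)..P.L, Real.exp (σ * x) * β0 x ^ 2)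
        + p / 2 * k3 * P.c6 * β0 P.L ^ 2
        - (2 * k3 * P.k - k3 * P.c6 / (2 * p) - k2 * P.c4 * Real.exp (σ * P.L)) *
          v P.L ^ 2 := by
  obtain ⟨hL, -, -, -, -, hc4, -, hc6, -, hk, -⟩ := hP
  have hL0 : (0:ℝ) ≤ P.L := hL.le
  have huIcc : Set.uIcc (0:ℝ) P.L = Icc 0 P.L := uIcc_of_le hL0
  set v' := derivWithin v (Icc 0 P.L) with hv'def
  have hvc : ContinuousOn v (Icc 0 P.L) := hv.continuousOn
  have hv'c : ContinuousOn v' (Icc 0 P.L) :=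
    hv.continuousOn_derivWithin (uniqueDiffOn_Icc hL) le_rfl
  have cexp : Continuous fun x : ℝ => Real.exp (σ * x) := by continuity
  have intOf : ∀ f : ℝ → ℝ, ContinuousOn f (Icc 0 P.L) →
      IntervalIntegrable f MeasureTheory.volume 0 P.L := by
    intro f hf
    apply ContinuousOn.intervalIntegrable
    rwa [huIcc]
  have e1 : IntervalIntegrable (fun x => Real.exp (σ * x) * v x ^ 2)
      MeasureTheory.volume 0 P.L := intOf _ (cexp.continuousOn.mul (hvc.pow 2))
  have e2 : IntervalIntegrable (fun x => Real.exp (σ * x) * β0 x ^ 2)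
      MeasureTheory.volume 0 P.L := intOf _ (cexp.continuousOn.mul (hβ0.pow 2))
  have e3 : IntervalIntegrable (fun x => Real.exp (σ * x) * v x * β0 x)
      MeasureTheory.volume 0 P.L :=
    intOf _ ((cexp.continuousOn.mul hvc).mul hβ0)
  have e4 : IntervalIntegrable (fun x => Real.exp (σ * x) * (v x * v' x))
      MeasureTheory.volume 0 P.L :=
    intOf _ (cexp.continuousOn.mul (hvc.mul hv'c))
  set B := ∫ x in (0:ℝ)..P.L, Real.exp (σ * x) * v x ^ 2 with hB
  set C := ∫ x in (0:ℝ)..P.L, Real.exp (σ * x) * v x * β0 x with hC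
  set Dq := ∫ x in (0:ℝ)..P.L, Real.exp (σ * x) * β0 x ^ 2 with hDq
  set eV := ∫ x in (0:ℝ)..P.L, Real.exp (σ * x) * (v x * v' x) with heV
  -- Integration by parts
  have hibp : (∫ x in (0:ℝ)..P.L,
      (σ * (Real.exp (σ * x) * v x ^ 2) + 2 * (Real.exp (σ * x) * (v x * v' x))))
      = Real.exp (σ * P.L) * v P.L ^ 2 - v 0 ^ 2 := by
    have h := intervalIntegral.integral_eq_sub_of_hasDeriv_right_of_le hL0
      (f := fun x => Real.exp (σ * x) * v x ^ 2)
      (f' := fun x => σ * (Real.exp (σ * x) * v x ^ 2) +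
        2 * (Real.exp (σ * x) * (v x * v' x)))
      (cexp.continuousOn.mul (hvc.pow 2))
      (fun x hx => by
        have hmem : Icc (0:ℝ) P.L ∈ nhds x := Icc_mem_nhds hx.1 hx.2
        have hdv : HasDerivAt v (v' x) x :=
          ((hv.differentiableOn one_ne_zero x (Ioo_subset_Icc_self hx)).hasDerivWithinAt).hasDerivAt
            hmem
        have he : HasDerivAt (fun y : ℝ => Real.exp (σ * y)) (Real.exp (σ * x) * σ) x := by
          simpa using ((hasDerivAt_id x).const_mul σ).exp
        apply HasDerivAt.hasDerivWithinAt
        convert he.fun_mul (hdv.fun_pow 2) using 1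
        · rfl
        norm_num
        ring)
      ((e1.const_mul σ).add (e4.const_mul 2))
    simpa using h
  have hibp' : σ * B + 2 * eV = Real.exp (σ * P.L) * v P.L ^ 2 - v 0 ^ 2 := by
    rw [intervalIntegral.integral_add (e1.const_mul σ) (e4.const_mul 2),
      intervalIntegral.integral_const_mul, intervalIntegral.integral_const_mul] at hibp
    rw [hB, heV]
    exact hibp
  have hA : (∫ x in (0:ℝ)..P.L, P.c4 * Real.exp (σ * x) * v x * v' x)
      = P.c4 * eV := by
    rw [heV, ← intervalIntegral.integral_const_mul]
    exact intervalIntegral.integral_congr (fun x _ => by ring)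
  -- Young's inequality (integral form)
  have h0 : (0:ℝ) ≤ ∫ x in (0:ℝ)..P.L, Real.exp (σ * x) * (v x + 2 * β0 x) ^ 2 / 2 :=
    intervalIntegral.integral_nonneg hL0 (fun x _ => by positivity)
  have hexp : (∫ x in (0:ℝ)..P.L, Real.exp (σ * x) * (v x + 2 * β0 x) ^ 2 / 2)
      = (1/2) * B + (2 * C + 2 * Dq) := by
    have hfe : (fun x => Real.exp (σ * x) * (v x + 2 * β0 x) ^ 2 / 2)
        = fun x => (1/2) * (Real.exp (σ * x) * v x ^ 2) +
          (2 * (Real.exp (σ * x) * v x * β0 x) + 2 * (Real.exp (σ * x) * β0 x ^ 2)) := by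
      funext x; ring
    rw [hfe, intervalIntegral.integral_add (e1.const_mul _)
        ((e3.const_mul _).add (e2.const_mul _)),
      intervalIntegral.integral_add (e3.const_mul _) (e2.const_mul _),
      intervalIntegral.integral_const_mul, intervalIntegral.integral_const_mul,
      intervalIntegral.integral_const_mul, hB, hC, hDq]
  have hYoung : (0:ℝ) ≤ (1/2) * B + (2 * C + 2 * Dq) := hexp ▸ h0
  -- Young's inequality at the boundary
  have hY2 : (0:ℝ) ≤ v P.L ^ 2 + 2 * p * (v P.L * β0 P.L) + p ^ 2 * β0 P.L ^ 2 := by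
    nlinarith [sq_nonneg (v P.L + p * β0 P.L)]
  have hp' : p ≠ 0 := ne_of_gt hp
  have t1 : (0:ℝ) ≤ k2 * P.c6 * ((1/2) * B + (2 * C + 2 * Dq)) :=
    mul_nonneg (by positivity) hYoung
  have t2 : (0:ℝ) ≤ k3 * P.c6 / (2 * p) * v P.L ^ 2 + k3 * P.c6 * (v P.L * β0 P.L)
      + k3 * P.c6 * p / 2 * β0 P.L ^ 2 := by
    have h := mul_nonneg (show (0:ℝ) ≤ k3 * P.c6 / (2 * p) by positivity) hY2
    have heq : k3 * P.c6 / (2 * p) *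
        (v P.L ^ 2 + 2 * p * (v P.L * β0 P.L) + p ^ 2 * β0 P.L ^ 2)
        = k3 * P.c6 / (2 * p) * v P.L ^ 2 + k3 * P.c6 * (v P.L * β0 P.L)
          + k3 * P.c6 * p / 2 * β0 P.L ^ 2 := by
      field_simp
    linarith [heq ▸ h]
  have hII2 : II = P.c4 * k2 * (Real.exp (σ * P.L) * v P.L ^ 2 - v 0 ^ 2 - σ * B)
      - 2 * k2 * P.k * B - 2 * k2 * P.c6 * C - k3 * P.c6 * v P.L * β0 P.L
      - 2 * k3 * P.k * v P.L ^ 2 := by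
    rw [hII, hA]
    linear_combination k2 * P.c4 * hibp'
  rw [hII2]
  nlinarith [t1, t2]
end
end

section
/- Let ρ, v : [0,L]×(0,∞)→ℝ be continuously differentiable and w : [0,L]×(0,∞)→ℝ continuous, satisfying the linearized ARZ equations: ∂_t ρ(x,t) = −v̄·∂_x ρ(x,t) − ρ̄·∂_x v(x,t) and ∂_t v(x,t) = (l/h̄_mix)·∂_x v(x,t) − (1/(ρ̄²·τ_mix·h̄_mix))·ρ(x,t) − (1/τ_mix)·v(x,t) − (α·(1−l·ρ̄)/(τ_acc·h̄_acc²·ρ̄))·w(x,t) for x∈(0,L), t>0, with boundary condition ρ(0,t) = −(ρ̄/v̄)·v(0,t). Then the Riemann variable z(x,t) := exp(x/(v̄·τ_mix))·(ρ(x,t) + h̄_mix·ρ̄²·v(x,t)) satisfies the diagonalized equation ∂_t z(x,t) = −c1·∂_x z(x,t) − c3·exp(c2·x)·w(x,t) for x∈(0,L), t>0, and the boundary condition z(0,t) = −c7·v(0,t). -/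
open Set

/-- The Riemann variable
`z(x,t) = exp(x/(v̄ τ_mix)) (ρ(x,t) + h̄_mix ρ̄² v(x,t))` diagonalizes the linearized
ARZ equations: it satisfies `∂ₜ z = -c1 ∂ₓ z - c3 e^{c2 x} w` and the boundary
condition `z(0,t) = -c7 v(0,t)`, where `c1 = v̄`, `c2 = 1/(τ_mix v̄)`,
`c3 = (α h̄_mix ρ̄²/(τ_acc h̄_acc²))(1/ρ̄ - l)` and `c7 = l ρ̄²/v̄`. -/
theorem riemann_variable_diagonalizes (L v_bar ρ_bar h_mix τ_mix l τ_acc h_acc α : ℝ)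
    (hL : 0 < L) (hv : 0 < v_bar) (hρ : 0 < ρ_bar) (hh : 0 < h_mix)
    (hτ : 0 < τ_mix) (hl : 0 < l) (hτa : 0 < τ_acc) (hha : 0 < h_acc)
    (hα : 0 < α ∧ α ≤ 1)
    (hss : ρ_bar * (l + h_mix * v_bar) = 1)
    (ρ v w : ℝ → ℝ → ℝ)
    (hρreg : ContDiffOn ℝ 1 (fun p : ℝ × ℝ => ρ p.1 p.2) (Icc 0 L ×ˢ Ioi 0))
    (hvreg : ContDiffOn ℝ 1 (fun p : ℝ × ℝ => v p.1 p.2) (Icc 0 L ×ˢ Ioi 0))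
    (hwreg : ContinuousOn (fun p : ℝ × ℝ => w p.1 p.2) (Icc 0 L ×ˢ Ioi 0))
    (hρpde : ∀ x ∈ Ioo (0:ℝ) L, ∀ t > (0:ℝ),
      deriv (fun t' => ρ x t') t =
        -v_bar * deriv (fun x' => ρ x' t) x - ρ_bar * deriv (fun x' => v x' t) x)
    (hvpde : ∀ x ∈ Ioo (0:ℝ) L, ∀ t > (0:ℝ),
      deriv (fun t' => v x t') t =
        l / h_mix * deriv (fun x' => v x' t) x
          - 1 / (ρ_bar ^ 2 * τ_mix * h_mix) * ρ x t
          - 1 / τ_mix * v x t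
          - α * (1 - l * ρ_bar) / (τ_acc * h_acc ^ 2 * ρ_bar) * w x t)
    (hbc : ∀ t > (0:ℝ), ρ 0 t = -(ρ_bar / v_bar) * v 0 t) :
    (∀ x ∈ Ioo (0:ℝ) L, ∀ t > (0:ℝ),
      ∃ zx : ℝ,
        HasDerivAt
          (fun x' => Real.exp (x' / (v_bar * τ_mix)) *
            (ρ x' t + h_mix * ρ_bar ^ 2 * v x' t)) zx x ∧
        HasDerivAt
          (fun t' => Real.exp (x / (v_bar * τ_mix)) *
            (ρ x t' + h_mix * ρ_bar ^ 2 * v x t'))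
          (-v_bar * zx
            - α * h_mix * ρ_bar ^ 2 / (τ_acc * h_acc ^ 2) * (1 / ρ_bar - l) *
              Real.exp (1 / (τ_mix * v_bar) * x) * w x t) t) ∧
    ∀ t > (0:ℝ),
      Real.exp ((0:ℝ) / (v_bar * τ_mix)) * (ρ 0 t + h_mix * ρ_bar ^ 2 * v 0 t)
        = -(l * ρ_bar ^ 2 / v_bar) * v 0 t := by
  obtain ⟨hα1, hα2⟩ := hα
  have hv' : v_bar ≠ 0 := ne_of_gt hv
  have hρ' : ρ_bar ≠ 0 := ne_of_gt hρ
  have hh' : h_mix ≠ 0 := ne_of_gt hh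
  have hτ' : τ_mix ≠ 0 := ne_of_gt hτ
  have hτa' : τ_acc ≠ 0 := ne_of_gt hτa
  have hha' : h_acc ≠ 0 := ne_of_gt hha
  have key : ρ_bar * l + ρ_bar * h_mix * v_bar = 1 := by linear_combination hss
  constructor
  · intro x hx t ht
    have hmem : (Icc 0 L ×ˢ Ioi 0 : Set (ℝ × ℝ)) ∈ nhds (x, t) :=
      Filter.mem_of_superset ((isOpen_Ioo.prod isOpen_Ioi).mem_nhds ⟨hx, ht⟩)
        (prod_mono Ioo_subset_Icc_self subset_rfl)
    have hρd : DifferentiableAt ℝ (fun p : ℝ × ℝ => ρ p.1 p.2) (x, t) :=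
      (hρreg.contDiffAt hmem).differentiableAt one_ne_zero
    have hvd : DifferentiableAt ℝ (fun p : ℝ × ℝ => v p.1 p.2) (x, t) :=
      (hvreg.contDiffAt hmem).differentiableAt one_ne_zero
    have hρx : HasDerivAt (fun x' => ρ x' t) (deriv (fun x' => ρ x' t) x) x :=
      (hρd.comp (f := fun x' : ℝ => (x', t)) x (differentiableAt_id.prodMk (differentiableAt_const t))).hasDerivAt
    have hvx : HasDerivAt (fun x' => v x' t) (deriv (fun x' => v x' t) x) x :=
      (hvd.comp (f := fun x' : ℝ => (x', t)) x (differentiableAt_id.prodMk (differentiableAt_const t))).hasDerivAt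
    have hρt : HasDerivAt (fun t' => ρ x t') (deriv (fun t' => ρ x t') t) t :=
      (hρd.comp t ((differentiableAt_const x).prodMk differentiableAt_id)).hasDerivAt
    have hvt : HasDerivAt (fun t' => v x t') (deriv (fun t' => v x t') t) t :=
      (hvd.comp t ((differentiableAt_const x).prodMk differentiableAt_id)).hasDerivAt
    have hex : HasDerivAt (fun x' : ℝ => Real.exp (x' / (v_bar * τ_mix)))
        (Real.exp (x / (v_bar * τ_mix)) * (1 / (v_bar * τ_mix))) x :=
      ((hasDerivAt_id x).div_const (v_bar * τ_mix)).exp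
    have hsum : HasDerivAt (fun x' => ρ x' t + h_mix * ρ_bar ^ 2 * v x' t)
        (deriv (fun x' => ρ x' t) x + h_mix * ρ_bar ^ 2 * deriv (fun x' => v x' t) x) x :=
      hρx.add (hvx.const_mul _)
    refine ⟨_, hex.mul hsum, ?_⟩
    have htsum : HasDerivAt (fun t' => ρ x t' + h_mix * ρ_bar ^ 2 * v x t')
        (deriv (fun t' => ρ x t') t + h_mix * ρ_bar ^ 2 * deriv (fun t' => v x t') t) t :=
      hρt.add (hvt.const_mul _)
    have := htsum.const_mul (Real.exp (x / (v_bar * τ_mix)))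
    refine this.congr_deriv ?_
    symm
    rw [hρpde x hx t ht, hvpde x hx t ht]
    have hxe : (1 / (τ_mix * v_bar) * x) = x / (v_bar * τ_mix) := by ring
    rw [hxe]
    set e := Real.exp (x / (v_bar * τ_mix)) with he
    set Rx := deriv (fun x' => ρ x' t) x
    set Vx := deriv (fun x' => v x' t) x
    field_simp
    linear_combination (-(e * ρ_bar * τ_mix * Vx * τ_acc * h_acc ^ 2)) * key
  · intro t ht
    rw [hbc t ht]
    simp only [zero_div, Real.exp_zero, one_mul]
    field_simp
    linear_combination (v 0 t) * key
end
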